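/- arXiv:2004.06636 — 6 statements merged into one kernel-verified Lean document; each statement's English description precedes it below -/
import Mathlib

section
/- Let μ be a finite countably additive nonnegative measure on (Ω,𝓕). (1) μ is supported if and only if there is an event S∈𝓕 with μ(Sᶜ)=0 such that 1_S ⪯ 1_A holds in L⁰_𝐜 for every A∈𝓕 with μ(Aᶜ)=0; in that case S is a version of the order support S(μ). (2) Let 𝒞 = {1_A : A∈𝓕, μ(Aᶜ)=0} ⊂ L^∞_𝐜. If inf 𝒞 exists in L^∞_𝐜, then inf 𝒞 = 1_S for some event S∈𝓕, and μ is supported if and only if μ(Sᶜ)=0. -/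
open MeasureTheory Set Filter

namespace Robust

universe u

variable {Ω : Type*} [MeasurableSpace Ω]

/-- `N` is a `𝔓`-polar event: every measure in `𝔓` assigns it measure zero. -/
def Polar (𝔓 : Set (Measure Ω)) (N : Set Ω) : Prop := ∀ P ∈ 𝔓, P N = 0

/-- `f ≤ g` holds `𝔓`-quasi surely. -/
def QSLe (𝔓 : Set (Measure Ω)) (f g : Ω → ℝ) : Prop := Polar 𝔓 {ω | ¬ f ω ≤ g ω}

/-- `f = g` holds `𝔓`-quasi surely; this is the equivalence relation defining `L⁰_𝐜`. -/
def QSEq (𝔓 : Set (Measure Ω)) (f g : Ω → ℝ) : Prop := QSLe 𝔓 f g ∧ QSLe 𝔓 g f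

/-- A representative of an element of `L^∞_𝐜`: a measurable, `𝔓`-q.s. bounded function. -/
def MemLinf (𝔓 : Set (Measure Ω)) (f : Ω → ℝ) : Prop :=
  Measurable f ∧ ∃ m : ℝ, QSLe 𝔓 (fun ω => |f ω|) fun _ => m

/-- The `L^∞_𝐜` norm of (the class of) `f`. -/
noncomputable def linfNorm (𝔓 : Set (Measure Ω)) (f : Ω → ℝ) : ℝ :=
  sInf {m : ℝ | 0 ≤ m ∧ QSLe 𝔓 (fun ω => |f ω|) fun _ => m}

/-- `g` is a `𝔓`-q.s. upper bound of the set of functions `S`. -/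
def IsQSUB (𝔓 : Set (Measure Ω)) (S : Set (Ω → ℝ)) (g : Ω → ℝ) : Prop := ∀ f ∈ S, QSLe 𝔓 f g

/-- `g` is a `𝔓`-q.s. lower bound of the set of functions `S`. -/
def IsQSLB (𝔓 : Set (Measure Ω)) (S : Set (Ω → ℝ)) (g : Ω → ℝ) : Prop := ∀ f ∈ S, QSLe 𝔓 g f

/-- `g` is a supremum of `S` in `L⁰_𝐜` (least upper bound for the q.s. order). -/
def IsQSSup (𝔓 : Set (Measure Ω)) (S : Set (Ω → ℝ)) (g : Ω → ℝ) : Prop :=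
  IsQSUB 𝔓 S g ∧ ∀ h : Ω → ℝ, Measurable h → IsQSUB 𝔓 S h → QSLe 𝔓 g h

/-- `g` is an infimum of `S` in `L⁰_𝐜` (greatest lower bound for the q.s. order). -/
def IsQSInf (𝔓 : Set (Measure Ω)) (S : Set (Ω → ℝ)) (g : Ω → ℝ) : Prop :=
  IsQSLB 𝔓 S g ∧ ∀ h : Ω → ℝ, Measurable h → IsQSLB 𝔓 S h → QSLe 𝔓 h g

/-- `S` is an order support of the measure `μ` relative to `𝔓`. -/
def IsOrderSupport (𝔓 : Set (Measure Ω)) (μ : Measure Ω) (S : Set Ω) : Prop :=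
  MeasurableSet S ∧ μ Sᶜ = 0 ∧
    ∀ N : Set Ω, MeasurableSet N → μ (N ∩ S) = 0 → Polar 𝔓 (N ∩ S)

/-- The measure `μ` is supported (relative to the polar events of `𝔓`). -/
def Supported (𝔓 : Set (Measure Ω)) (μ : Measure Ω) : Prop := ∃ S, IsOrderSupport 𝔓 μ S

/-- Two sets of measures are equivalent: they have the same polar events. -/
def PolarEquiv (𝔓 𝔔 : Set (Measure Ω)) : Prop :=
  ∀ N : Set Ω, MeasurableSet N → (Polar 𝔓 N ↔ Polar 𝔔 N)

/-- `𝔔` is a supported alternative to `𝔓`. -/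
def IsSuppAlt (𝔓 𝔔 : Set (Measure Ω)) : Prop :=
  𝔔.Nonempty ∧ (∀ Q ∈ 𝔔, IsProbabilityMeasure Q) ∧ PolarEquiv 𝔓 𝔔 ∧ ∀ Q ∈ 𝔔, Supported 𝔓 Q

/-- `𝔓` is of class (S). -/
def ClassS (𝔓 : Set (Measure Ω)) : Prop := ∃ 𝔔 : Set (Measure Ω), IsSuppAlt 𝔓 𝔔

/-- The total variation norm of a signed measure. -/
noncomputable def tv (μ : SignedMeasure Ω) : ℝ := (μ.totalVariation Set.univ).toReal

/-- `ca_𝐜`: signed measures whose total variation vanishes on `𝔓`-polar events. -/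
def caC (𝔓 : Set (Measure Ω)) : Set (SignedMeasure Ω) :=
  {μ | ∀ N : Set Ω, MeasurableSet N → Polar 𝔓 N → μ.totalVariation N = 0}

/-- `sca_𝐜`: members of `ca_𝐜` whose total variation is supported. -/
def scaC (𝔓 : Set (Measure Ω)) : Set (SignedMeasure Ω) :=
  {μ | μ ∈ caC 𝔓 ∧ Supported 𝔓 μ.totalVariation}

/-- Integral of `f` against a signed measure, via the Jordan decomposition. -/
noncomputable def integSM (f : Ω → ℝ) (μ : SignedMeasure Ω) : ℝ :=
  ∫ ω, f ω ∂μ.toJordanDecomposition.posPart - ∫ ω, f ω ∂μ.toJordanDecomposition.negPart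

/-- `ca_{𝐜,+}`: finite (nonnegative) measures vanishing on `𝔓`-polar events. -/
def caCpos (𝔓 : Set (Measure Ω)) : Set (Measure Ω) :=
  {μ | IsFiniteMeasure μ ∧ ∀ N : Set Ω, MeasurableSet N → Polar 𝔓 N → μ N = 0}

/-- Order convergence in `L⁰_𝐜` of a net `X` to `x`: there is an antitone net of measurable
functions with q.s. infimum `0` dominating `|X α - x|`. -/
def OrderConvTo (𝔓 : Set (Measure Ω)) {ι : Type u} [Preorder ι]
    (X : ι → Ω → ℝ) (x : Ω → ℝ) : Prop :=
  ∃ Y : ι → Ω → ℝ, (∀ α, Measurable (Y α)) ∧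
    (∀ α β, α ≤ β → QSLe 𝔓 (Y β) (Y α)) ∧
    IsQSInf 𝔓 (Set.range Y) (fun _ => 0) ∧
    ∀ α, QSLe 𝔓 (fun ω => |X α ω - x ω|) (Y α)

/-- Order convergence in `L^∞_𝐜` of a net `X` to `x`: the dominating net lies in `L^∞_𝐜`. -/
def OrderConvToLinf (𝔓 : Set (Measure Ω)) {ι : Type u} [Preorder ι]
    (X : ι → Ω → ℝ) (x : Ω → ℝ) : Prop :=
  ∃ Y : ι → Ω → ℝ, (∀ α, MemLinf 𝔓 (Y α)) ∧
    (∀ α β, α ≤ β → QSLe 𝔓 (Y β) (Y α)) ∧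
    IsQSInf 𝔓 (Set.range Y) (fun _ => 0) ∧
    ∀ α, QSLe 𝔓 (fun ω => |X α ω - x ω|) (Y α)

/-- A set of (classes of) functions in `L⁰_𝐜` is order closed: it contains (a representative of)
the order limit of every order convergent net of its elements. -/
def OrderClosedL0 (𝔓 : Set (Measure Ω)) (𝒞 : Set (Ω → ℝ)) : Prop :=
  ∀ (ι : Type u) [Preorder ι] [IsDirected ι (· ≤ ·)] [Nonempty ι],
    ∀ (X : ι → Ω → ℝ) (x : Ω → ℝ), (∀ α, X α ∈ 𝒞) → Measurable x →
      OrderConvTo 𝔓 X x → ∃ x' ∈ 𝒞, QSEq 𝔓 x x'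

/-- A subset of `L^∞_𝐜` is order closed. -/
def OrderClosedLinf (𝔓 : Set (Measure Ω)) (𝒞 : Set (Ω → ℝ)) : Prop :=
  ∀ (ι : Type u) [Preorder ι] [IsDirected ι (· ≤ ·)] [Nonempty ι],
    ∀ (X : ι → Ω → ℝ) (x : Ω → ℝ), (∀ α, X α ∈ 𝒞) → MemLinf 𝔓 x →
      OrderConvToLinf 𝔓 X x → ∃ x' ∈ 𝒞, QSEq 𝔓 x x'

/-- `L^∞_𝐜` is Dedekind complete: every nonempty subset bounded above has a supremum. -/
def LinfDedekind (𝔓 : Set (Measure Ω)) : Prop :=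
  ∀ S : Set (Ω → ℝ), S.Nonempty → (∀ f ∈ S, MemLinf 𝔓 f) →
    (∃ h, MemLinf 𝔓 h ∧ IsQSUB 𝔓 S h) →
    ∃ g, MemLinf 𝔓 g ∧ IsQSSup 𝔓 S g

/-- `L^∞_𝐜` has the countable sup property. -/
def LinfCountableSup (𝔓 : Set (Measure Ω)) : Prop :=
  ∀ S : Set (Ω → ℝ), (∀ f ∈ S, MemLinf 𝔓 f) →
    ∀ g, MemLinf 𝔓 g → IsQSSup 𝔓 S g →
      ∃ D ⊆ S, D.Countable ∧ IsQSSup 𝔓 D g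

/-- indicator function of a set, real valued. -/
noncomputable def indC (A : Set Ω) : Ω → ℝ := A.indicator 1

lemma polar_mono {𝔓 : Set (Measure Ω)} {N M : Set Ω} (h : N ⊆ M) (hM : Polar 𝔓 M) :
    Polar 𝔓 N := fun P hP => measure_mono_null h (hM P hP)

lemma polar_union {𝔓 : Set (Measure Ω)} {N M : Set Ω} (hN : Polar 𝔓 N) (hM : Polar 𝔓 M) :
    Polar 𝔓 (N ∪ M) := fun P hP => measure_union_null (hN P hP) (hM P hP)

lemma qsle_trans {𝔓 : Set (Measure Ω)} {f g h : Ω → ℝ} (h1 : QSLe 𝔓 f g)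
    (h2 : QSLe 𝔓 g h) : QSLe 𝔓 f h := by
  refine polar_mono ?_ (polar_union h1 h2)
  intro ω hω
  simp only [Set.mem_union, Set.mem_setOf_eq]
  by_contra hc
  push_neg at hc
  exact hω (hc.1.trans hc.2)

lemma setof_not_ind_le (S A : Set Ω) : {ω | ¬ indC S ω ≤ indC A ω} = S \ A := by
  ext ω
  by_cases hS : ω ∈ S <;> by_cases hA : ω ∈ A <;>
    simp [indC, Set.indicator_apply, hS, hA]

lemma qsle_ind_iff {𝔓 : Set (Measure Ω)} (S A : Set Ω) :
    QSLe 𝔓 (indC S) (indC A) ↔ Polar 𝔓 (S \ A) := by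
  unfold QSLe
  rw [setof_not_ind_le]

lemma measurable_indC {A : Set Ω} (hA : MeasurableSet A) : Measurable (indC A) :=
  measurable_one.indicator hA

/-- Lemma 2.? (lem:simple): characterisation of supportedness via indicators, and via an
infimum of indicators in `L^∞_𝐜`. -/
theorem supported_characterisation
    {Ω : Type*} [MeasurableSpace Ω] (𝔓 : Set (Measure Ω)) (h𝔓 : 𝔓.Nonempty)
    (hprob : ∀ P ∈ 𝔓, IsProbabilityMeasure P)
    (μ : Measure Ω) (hfin : IsFiniteMeasure μ) :
    -- (1)
    ((Supported 𝔓 μ ↔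
        ∃ S : Set Ω, MeasurableSet S ∧ μ Sᶜ = 0 ∧
          ∀ A : Set Ω, MeasurableSet A → μ Aᶜ = 0 → QSLe 𝔓 (indC S) (indC A)) ∧
      (∀ S : Set Ω, MeasurableSet S → μ Sᶜ = 0 →
        (∀ A : Set Ω, MeasurableSet A → μ Aᶜ = 0 → QSLe 𝔓 (indC S) (indC A)) →
        IsOrderSupport 𝔓 μ S)) ∧
    -- (2)
    ((∃ g : Ω → ℝ, MemLinf 𝔓 g ∧
        IsQSInf 𝔓 {f | ∃ A : Set Ω, MeasurableSet A ∧ μ Aᶜ = 0 ∧ f = indC A} g) →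
      ∃ S : Set Ω, MeasurableSet S ∧
        IsQSInf 𝔓 {f | ∃ A : Set Ω, MeasurableSet A ∧ μ Aᶜ = 0 ∧ f = indC A} (indC S) ∧
        (Supported 𝔓 μ ↔ μ Sᶜ = 0)) := by
  classical
  -- (1b)
  have part1b : ∀ S : Set Ω, MeasurableSet S → μ Sᶜ = 0 →
      (∀ A : Set Ω, MeasurableSet A → μ Aᶜ = 0 → QSLe 𝔓 (indC S) (indC A)) →
      IsOrderSupport 𝔓 μ S := by
    intro S hSm hSc hind
    refine ⟨hSm, hSc, ?_⟩
    intro N hNm hNμ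
    have hA : MeasurableSet ((N ∩ S)ᶜ) := (hNm.inter hSm).compl
    have hAc : μ ((N ∩ S)ᶜ)ᶜ = 0 := by rwa [compl_compl]
    have h := (qsle_ind_iff (𝔓 := 𝔓) S ((N ∩ S)ᶜ)).mp (hind _ hA hAc)
    refine polar_mono ?_ h
    intro ω hω
    exact ⟨hω.2, fun hc => hc hω⟩
  -- (1a) forward
  have part1aF : Supported 𝔓 μ →
      ∃ S : Set Ω, MeasurableSet S ∧ μ Sᶜ = 0 ∧
        ∀ A : Set Ω, MeasurableSet A → μ Aᶜ = 0 → QSLe 𝔓 (indC S) (indC A) := by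
    rintro ⟨S, hSm, hSc, hsupp⟩
    refine ⟨S, hSm, hSc, fun A hAm hAc => ?_⟩
    rw [qsle_ind_iff]
    have hμ : μ (Aᶜ ∩ S) = 0 := measure_mono_null Set.inter_subset_left hAc
    refine polar_mono ?_ (hsupp Aᶜ hAm.compl hμ)
    intro ω hω
    exact ⟨hω.2, hω.1⟩
  refine ⟨⟨⟨part1aF, ?_⟩, part1b⟩, ?_⟩
  · rintro ⟨S, h1, h2, h3⟩
    exact ⟨S, part1b S h1 h2 h3⟩
  -- (2)
  rintro ⟨g, ⟨hgm, -⟩, hglb, hgmax⟩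
  by_cases hsup : Supported 𝔓 μ
  · obtain ⟨S, hSm, hSc, hind⟩ := part1aF hsup
    refine ⟨S, hSm, ⟨?_, ?_⟩, iff_of_true hsup hSc⟩
    · rintro f ⟨A, hAm, hAc, rfl⟩
      exact hind A hAm hAc
    · intro h hm hlb
      exact hlb (indC S) ⟨S, hSm, hSc, rfl⟩
  · -- T := {ω | 1 ≤ g ω}
    have hTm : MeasurableSet {ω | 1 ≤ g ω} := measurableSet_le measurable_const hgm
    have hGm : MeasurableSet {ω | 0 < g ω} := measurableSet_lt measurable_const hgm
    -- 1_T is a lower bound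
    have hTlb : ∀ A : Set Ω, MeasurableSet A → μ Aᶜ = 0 →
        QSLe 𝔓 (indC {ω | 1 ≤ g ω}) (indC A) := by
      intro A hAm hAc
      rw [qsle_ind_iff]
      refine polar_mono ?_ (hglb (indC A) ⟨A, hAm, hAc, rfl⟩)
      intro ω hω
      simp only [Set.mem_setOf_eq]
      intro hc
      have h0 : indC A ω = 0 := by simp [indC, Set.indicator_apply, hω.2]
      rw [h0] at hc
      have h1 : (1 : ℝ) ≤ g ω := hω.1
      linarith
    -- 1_G is a lower bound, hence 1_G ≤ g q.s.
    have hGlb : IsQSLB 𝔓 {f | ∃ A : Set Ω, MeasurableSet A ∧ μ Aᶜ = 0 ∧ f = indC A}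
        (indC {ω | 0 < g ω}) := by
      rintro f ⟨A, hAm, hAc, rfl⟩
      rw [qsle_ind_iff]
      refine polar_mono ?_ (hglb (indC A) ⟨A, hAm, hAc, rfl⟩)
      intro ω hω
      simp only [Set.mem_setOf_eq]
      intro hc
      have h0 : indC A ω = 0 := by simp [indC, Set.indicator_apply, hω.2]
      rw [h0] at hc
      have h1 : (0 : ℝ) < g ω := hω.1
      linarith
    have hGle : QSLe 𝔓 (indC {ω | 0 < g ω}) g :=
      hgmax _ (measurable_indC hGm) hGlb
    have h1le : QSLe 𝔓 g (indC Set.univ) :=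
      hglb (indC Set.univ) ⟨Set.univ, MeasurableSet.univ, by simp, rfl⟩
    -- g ≤ 1_T q.s.
    have hgT : QSLe 𝔓 g (indC {ω | 1 ≤ g ω}) := by
      refine polar_mono ?_ (polar_union hGle h1le)
      intro ω hω
      simp only [Set.mem_union, Set.mem_setOf_eq]
      by_contra hc
      push_neg at hc
      obtain ⟨h1, h2⟩ := hc
      apply hω
      have h2' : g ω ≤ 1 := by simpa [indC] using h2
      by_cases hωT : (1 : ℝ) ≤ g ω
      · have : indC {ω | 1 ≤ g ω} ω = 1 := by
          simp [indC, Set.indicator_apply, Set.mem_setOf_eq, hωT]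
        rw [this]; exact h2'
      · have hT0 : indC {ω | 1 ≤ g ω} ω = 0 := by
          simp [indC, Set.indicator_apply, Set.mem_setOf_eq, hωT]
        rw [hT0]
        by_contra hg0
        push_neg at hg0
        have hωG : ω ∈ {ω | 0 < g ω} := hg0
        have : indC {ω | 0 < g ω} ω = 1 := by
          simp [indC, Set.indicator_apply, hωG]
        rw [this] at h1
        exact hωT h1
    refine ⟨{ω | 1 ≤ g ω}, hTm, ⟨?_, ?_⟩, ?_⟩
    · rintro f ⟨A, hAm, hAc, rfl⟩
      exact hTlb A hAm hAc
    · intro h hm hlb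
      exact qsle_trans (hgmax h hm hlb) hgT
    · exact iff_of_false hsup fun hTc => hsup ⟨_, part1b _ hTm hTc hTlb⟩

end Robust
end

section
/- For a nonempty set 𝔓 of probability measures on (Ω,𝓕) the following are equivalent: (1) 𝔓 is of class (S); (2) there is a set 𝔔 of probability measures on (Ω,𝓕) with 𝔔 ≈ 𝔓 that is majorised by some (possibly non-σ-finite) measure μ on (Ω,𝓕), meaning every Q∈𝔔 has a density with respect to μ. Moreover, if 𝔔 is as in (2), then sca_𝐜 equals the band generated by 𝔔 in ca_𝐜, and also the band generated by 𝔔 in ca. -/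
open MeasureTheory Set Filter

namespace Robust

universe u

variable {Ω : Type*} [MeasurableSpace Ω]

/-- `𝔔` is majorised by a (possibly non-σ-finite) measure `μ`: each `Q ∈ 𝔔` has a
`μ`-density. -/
def Majorised {Ω : Type*} [MeasurableSpace Ω] (𝔔 : Set (Measure Ω)) : Prop :=
  ∃ μ : Measure Ω, ∀ Q ∈ 𝔔, ∃ f : Ω → ENNReal, Measurable f ∧ Q = μ.withDensity f

/-- `B` is a band in the (sub)lattice `M` of the vector lattice of signed measures with the
setwise order: a subspace, solid in `M`, and closed under existing suprema in `M`. -/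
def IsBandIn {Ω : Type*} [MeasurableSpace Ω] (M B : Set (SignedMeasure Ω)) : Prop :=
  B ⊆ M ∧ (0 : SignedMeasure Ω) ∈ B ∧
  (∀ μ ∈ B, ∀ ν ∈ B, μ + ν ∈ B) ∧
  (∀ (a : ℝ), ∀ μ ∈ B, a • μ ∈ B) ∧
  (∀ μ ∈ M, ∀ ν ∈ B,
      (∀ A : Set Ω, MeasurableSet A → μ.totalVariation A ≤ ν.totalVariation A) → μ ∈ B) ∧
  (∀ S ⊆ B, ∀ μ ∈ M,
      ((∀ ν ∈ S, ν ≤ μ) ∧ ∀ η ∈ M, (∀ ν ∈ S, ν ≤ η) → μ ≤ η) → μ ∈ B)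

/-- `B` is the band generated by `G` in `M`. -/
def IsBandGenBy {Ω : Type*} [MeasurableSpace Ω] (M B G : Set (SignedMeasure Ω)) : Prop :=
  IsBandIn M B ∧ G ⊆ B ∧ ∀ B' : Set (SignedMeasure Ω), IsBandIn M B' → G ⊆ B' → B ⊆ B'

/-- The set of measures `𝔔` viewed as signed measures. -/
def toSgn {Ω : Type*} [MeasurableSpace Ω] (𝔔 : Set (Measure Ω)) : Set (SignedMeasure Ω) :=
  {s | ∃ Q ∈ 𝔔, ∀ A : Set Ω, MeasurableSet A → s A = (Q A).toReal}

/-!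
(1) ⇒ (2): by Zorn's lemma take a maximal family of pairs `(Q, B)`, with `Q` from a supported
alternative and `Q B > 0`, such that `Q`-null subsets of `B` are polar and distinct sets `B` meet
in polar sets. By maximality every event missed by all the `Q|_B` is polar, so the conditioned
measures `Q(· | B)` form an equivalent family; they have densities `1_B / Q B` with respect to
`∑ Q|_B`. (2) ⇒ (1): the density of `Q` vanishes off an order support of `Q`, because the
majorising measure has the same null sets as `𝔓`.

The band statements rest on an exhaustion argument: a finite measure sees only countably many
members of any family of measurable sets. Hence a supremum of supported measures has the null
sets of countably many of them and is supported, and `|m|` for `m ∈ sca_𝐜` is carried by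
countably many sets on each of which it is dominated by a multiple of some `Q ∈ 𝔔`, which makes
it a supremum of elements of any band containing `𝔔`.
-/

open scoped ENNReal NNReal

instance : IsOrderedAddMonoid (SignedMeasure Ω) where
  add_le_add_left a b h c i hi := by
    simp only [add_apply]
    linarith [h i hi]

section SignedMeasure

variable {s t : SignedMeasure Ω}

theorem totalVariation_apply_eq_zero_iff {N : Set Ω} (hN : MeasurableSet N) :
    s.totalVariation N = 0 ↔ ∀ A ⊆ N, MeasurableSet A → s A = 0 := by
  rw [SignedMeasure.totalVariation_eq_variation]
  exact VectorMeasure.variation_apply_eq_zero hN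

theorem totalVariation_toSignedMeasure (μ : Measure Ω) [IsFiniteMeasure μ] :
    μ.toSignedMeasure.totalVariation = μ := by
  rw [SignedMeasure.totalVariation_eq_variation, Measure.variation_toSignedMeasure]

theorem toSignedMeasure_totalVariation (hs : 0 ≤ s) : s.totalVariation.toSignedMeasure = s := by
  have h := (VectorMeasure.le_restrict_univ_iff_le _ _).2 hs
  obtain ⟨μ, _, rfl⟩ : ∃ μ : Measure Ω, ∃ _ : IsFiniteMeasure μ, μ.toSignedMeasure = s :=
    ⟨_, inferInstance, s.toMeasureOfZeroLE_toSignedMeasure h⟩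
  exact Measure.toSignedMeasure_congr (totalVariation_toSignedMeasure μ)

theorem totalVariation_mono (hs : 0 ≤ s) (hst : s ≤ t) : s.totalVariation ≤ t.totalVariation := by
  rwa [← Measure.toSignedMeasure_le_toSignedMeasure_iff, toSignedMeasure_totalVariation hs,
    toSignedMeasure_totalVariation (hs.trans hst)]

theorem restrict_mono_left (hst : s ≤ t) (E : Set Ω) : s.restrict E ≤ t.restrict E := by
  by_cases hE : MeasurableSet E
  · intro A hA
    rw [VectorMeasure.restrict_apply _ hE hA, VectorMeasure.restrict_apply _ hE hA]
    exact hst _ (hA.inter hE)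
  · simp [VectorMeasure.restrict_not_measurable _ hE]

theorem apply_eq_apply_inter_add_apply_diff {A E : Set Ω} (hA : MeasurableSet A)
    (hE : MeasurableSet E) : s A = s (A ∩ E) + s (A \ E) := by
  rw [← VectorMeasure.of_union (disjoint_sdiff_inter.symm) (hA.inter hE) (hA.diff hE),
    inter_union_sdiff]

theorem restrict_le_self (hs : 0 ≤ s) (E : Set Ω) : s.restrict E ≤ s := by
  by_cases hE : MeasurableSet E
  · intro A hA
    rw [VectorMeasure.restrict_apply _ hE hA, apply_eq_apply_inter_add_apply_diff hA hE (s := s)]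
    have : 0 ≤ s (A \ E) := by simpa using hs _ (hA.diff hE)
    linarith
  · simpa [VectorMeasure.restrict_not_measurable _ hE] using hs

theorem restrict_compl_eq_self {N : Set Ω} (hN : MeasurableSet N)
    (h : s.totalVariation N = 0) : s.restrict Nᶜ = s := by
  ext A hA
  rw [VectorMeasure.restrict_apply _ hN.compl hA,
    apply_eq_apply_inter_add_apply_diff hA hN (s := s),
    (totalVariation_apply_eq_zero_iff hN).1 h _ inter_subset_right (hA.inter hN), zero_add,
    sdiff_eq]

theorem exists_nonneg_restrict_ge (s : SignedMeasure Ω) :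
    ∃ j, MeasurableSet j ∧ 0 ≤ s.restrict j ∧ s ≤ s.restrict j := by
  obtain ⟨j, hj, hpos, hneg⟩ := s.exists_compl_positive_negative
  refine ⟨j, hj, by simpa using hpos, fun A hA => ?_⟩
  have : s (A \ j) ≤ 0 := VectorMeasure.nonpos_of_restrict_le_zero _
    (VectorMeasure.restrict_le_zero_subset _ hj.compl (sdiff_subset_compl A j) hneg)
  rw [VectorMeasure.restrict_apply _ hj hA, apply_eq_apply_inter_add_apply_diff hA hj (s := s)]
  linarith

end SignedMeasure

section Support

variable {𝔓 : Set (Measure Ω)}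

theorem IsOrderSupport.withDensity {μ : Measure Ω} {S : Set Ω} (h : IsOrderSupport 𝔓 μ S)
    {f : Ω → ℝ≥0∞} (hf : Measurable f) :
    IsOrderSupport 𝔓 (μ.withDensity f) (S ∩ {x | f x ≠ 0}) := by
  obtain ⟨hS, hSc, hpolar⟩ := h
  have hf0 : MeasurableSet {x | f x ≠ 0} := (hf (measurableSet_singleton 0)).compl
  refine ⟨hS.inter hf0, ?_, fun N hN hN0 => ?_⟩
  · rw [withDensity_apply_eq_zero hf]
    exact measure_mono_null (fun x hx => fun hxS => hx.2 ⟨hxS, hx.1⟩) hSc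
  · rw [withDensity_apply_eq_zero hf] at hN0
    have := hpolar (N ∩ {x | f x ≠ 0}) (hN.inter hf0)
      (by convert hN0 using 2; ext; simp only [mem_inter_iff]; tauto)
    convert this using 1; ext; simp only [mem_inter_iff]; tauto

theorem Supported.of_absolutelyContinuous {μ ν : Measure Ω} [μ.HaveLebesgueDecomposition ν]
    (hν : Supported 𝔓 ν) (hμν : μ ≪ ν) : Supported 𝔓 μ := by
  obtain ⟨S, hS⟩ := hν
  rw [← Measure.withDensity_rnDeriv_eq μ ν hμν]
  exact ⟨_, hS.withDensity (Measure.measurable_rnDeriv μ ν)⟩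

theorem exists_countable_measure_diff_biUnion_eq_zero (μ : Measure Ω) [IsFiniteMeasure μ]
    {ι : Type*} {I : Set ι} {U : ι → Set Ω} (hU : ∀ i ∈ I, MeasurableSet (U i)) :
    ∃ J ⊆ I, J.Countable ∧ ∀ i ∈ I, μ (U i \ ⋃ j ∈ J, U j) = 0 := by
  set V : Set ℝ≥0∞ := {x | ∃ J ⊆ I, J.Countable ∧ μ (⋃ j ∈ J, U j) = x}
  obtain ⟨u, -, hu, huV⟩ := exists_seq_tendsto_sSup (S := V)
    ⟨0, ∅, empty_subset _, countable_empty, by simp⟩ (OrderTop.bddAbove V)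
  choose J hJI hJc hJu using huV
  refine ⟨⋃ n, J n, iUnion_subset hJI, countable_iUnion hJc, fun i hi => ?_⟩
  set W := ⋃ j ∈ ⋃ n, J n, U j
  have hW : MeasurableSet W :=
    .biUnion (countable_iUnion hJc) fun j hj => hU j (iUnion_subset hJI hj)
  have hsup : sSup V ≤ μ W := le_of_tendsto' hu fun n =>
    hJu n ▸ measure_mono (biUnion_subset_biUnion_left (subset_iUnion J n))
  have hle : μ (W ∪ U i) ≤ μ W := by
    refine (le_sSup (show μ (W ∪ U i) ∈ V from ⟨insert i (⋃ n, J n),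
      insert_subset hi (iUnion_subset hJI), (countable_iUnion hJc).insert i, ?_⟩)).trans hsup
    rw [biUnion_insert, union_comm]
  rw [← union_sdiff_self, measure_union disjoint_sdiff_right ((hU i hi).diff hW)] at hle
  exact nonpos_iff_eq_zero.1 <| (ENNReal.add_le_add_iff_left (measure_ne_top μ W)).1 <| by
    simpa using hle

/-- The union of countably many supports of members of `𝒯`, exhausting all of them up to
`μ`-null sets, is a support of `μ`. -/
theorem supported_of_polarEquiv_singleton {μ : Measure Ω} [IsFiniteMeasure μ]
    {𝒯 : Set (Measure Ω)} (hequiv : PolarEquiv {μ} 𝒯) (hsupp : ∀ τ ∈ 𝒯, Supported 𝔓 τ) :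
    Supported 𝔓 μ := by
  choose! S hS using hsupp
  obtain ⟨J, hJ𝒯, hJc, hJ⟩ :=
    exists_countable_measure_diff_biUnion_eq_zero μ fun τ hτ => (hS τ hτ).1
  set S₀ := ⋃ τ ∈ J, S τ
  have hS₀ : MeasurableSet S₀ := .biUnion hJc fun τ hτ => (hS τ (hJ𝒯 hτ)).1
  have hnull : ∀ N, MeasurableSet N → μ N = 0 → ∀ τ ∈ 𝒯, τ N = 0 := fun N hN h =>
    (hequiv N hN).1 (by simpa [Polar] using h)
  refine ⟨S₀, hS₀, ?_, fun N hN hN0 P hP => ?_⟩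
  · have hpolar : Polar 𝒯 S₀ᶜ := fun τ hτ =>
      measure_mono_null (fun x hx => by by_cases h : x ∈ S τ <;> simp_all)
        (measure_union_null (hnull _ ((hS τ hτ).1.diff hS₀) (hJ τ hτ) τ hτ) (hS τ hτ).2.1)
    simpa [Polar] using (hequiv _ hS₀.compl).2 hpolar
  · have hcover : N ∩ S₀ = ⋃ τ ∈ J, N ∩ S₀ ∩ S τ := by
      rw [← inter_iUnion₂, inter_assoc, inter_self]
    rw [hcover, measure_biUnion_null_iff hJc]
    exact fun τ hτ => (hS τ (hJ𝒯 hτ)).2.2 _ (hN.inter hS₀)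
      (measure_mono_null inter_subset_left (hnull _ (hN.inter hS₀) hN0 τ (hJ𝒯 hτ))) P hP

theorem Supported.add {μ ν : Measure Ω} [IsFiniteMeasure μ] [IsFiniteMeasure ν]
    (hμ : Supported 𝔓 μ) (hν : Supported 𝔓 ν) : Supported 𝔓 (μ + ν) :=
  supported_of_polarEquiv_singleton (𝒯 := {μ, ν}) (fun N _ => by simp [Polar])
    (by simp [hμ, hν])

end Support

section Closure

variable {𝔓 : Set (Measure Ω)} {s t : SignedMeasure Ω}

theorem totalVariation_add_le (s t : SignedMeasure Ω) :
    (s + t).totalVariation ≤ s.totalVariation + t.totalVariation := by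
  simp only [SignedMeasure.totalVariation_eq_variation]
  exact VectorMeasure.variation_add_le

theorem totalVariation_sub_le (s t : SignedMeasure Ω) :
    (s - t).totalVariation ≤ s.totalVariation + t.totalVariation := by
  simp only [SignedMeasure.totalVariation_eq_variation]
  exact VectorMeasure.variation_sub_le

theorem totalVariation_restrict_le (s : SignedMeasure Ω) (E : Set Ω) :
    SignedMeasure.totalVariation (s.restrict E) ≤ s.totalVariation := by
  simp only [SignedMeasure.totalVariation_eq_variation]
  exact VectorMeasure.variation_restrict_le.trans Measure.restrict_le_self

theorem totalVariation_smul_absolutelyContinuous (c : ℝ) (s : SignedMeasure Ω) :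
    (c • s).totalVariation ≪ s.totalVariation := by
  simp only [SignedMeasure.totalVariation_eq_variation, VectorMeasure.variation_smul]
  exact (Measure.AbsolutelyContinuous.refl _).smul_left _

theorem totalVariation_mem_caCpos (hs : s ∈ caC 𝔓) : s.totalVariation ∈ caCpos 𝔓 :=
  ⟨inferInstance, hs⟩

theorem add_mem_caCpos {μ ν : Measure Ω} (hμ : μ ∈ caCpos 𝔓) (hν : ν ∈ caCpos 𝔓) :
    μ + ν ∈ caCpos 𝔓 := by
  have := hμ.1
  have := hν.1
  exact ⟨inferInstance, fun N hN hpol => by simp [hμ.2 N hN hpol, hν.2 N hN hpol]⟩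

theorem mem_caC_of_absolutelyContinuous {μ : Measure Ω} (hμ : μ ∈ caCpos 𝔓)
    (h : s.totalVariation ≪ μ) : s ∈ caC 𝔓 :=
  fun N hN hpol => h (hμ.2 N hN hpol)

theorem mem_scaC_of_absolutelyContinuous {μ : Measure Ω} (hμ : μ ∈ caCpos 𝔓)
    (hsupp : Supported 𝔓 μ) (h : s.totalVariation ≪ μ) : s ∈ scaC 𝔓 := by
  have := hμ.1
  exact ⟨mem_caC_of_absolutelyContinuous hμ h, hsupp.of_absolutelyContinuous h⟩

theorem add_mem_caC (hs : s ∈ caC 𝔓) (ht : t ∈ caC 𝔓) : s + t ∈ caC 𝔓 :=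
  mem_caC_of_absolutelyContinuous
    (add_mem_caCpos (totalVariation_mem_caCpos hs) (totalVariation_mem_caCpos ht))
    (Measure.absolutelyContinuous_of_le (totalVariation_add_le s t))

theorem sub_mem_caC (hs : s ∈ caC 𝔓) (ht : t ∈ caC 𝔓) : s - t ∈ caC 𝔓 :=
  mem_caC_of_absolutelyContinuous
    (add_mem_caCpos (totalVariation_mem_caCpos hs) (totalVariation_mem_caCpos ht))
    (Measure.absolutelyContinuous_of_le (totalVariation_sub_le s t))

theorem restrict_mem_caC (hs : s ∈ caC 𝔓) (E : Set Ω) : s.restrict E ∈ caC 𝔓 :=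
  mem_caC_of_absolutelyContinuous (totalVariation_mem_caCpos hs)
    (Measure.absolutelyContinuous_of_le (totalVariation_restrict_le s E))

theorem zero_mem_scaC : (0 : SignedMeasure Ω) ∈ scaC 𝔓 :=
  ⟨fun N _ _ => by simp [SignedMeasure.totalVariation_zero],
    ∅, .empty, by simp [SignedMeasure.totalVariation_zero], fun N _ _ => by simp [Polar]⟩

theorem add_mem_scaC (hs : s ∈ scaC 𝔓) (ht : t ∈ scaC 𝔓) : s + t ∈ scaC 𝔓 :=
  mem_scaC_of_absolutelyContinuous
    (add_mem_caCpos (totalVariation_mem_caCpos hs.1) (totalVariation_mem_caCpos ht.1))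
    (hs.2.add ht.2) (Measure.absolutelyContinuous_of_le (totalVariation_add_le s t))

theorem sub_mem_scaC (hs : s ∈ scaC 𝔓) (ht : t ∈ scaC 𝔓) : s - t ∈ scaC 𝔓 :=
  mem_scaC_of_absolutelyContinuous
    (add_mem_caCpos (totalVariation_mem_caCpos hs.1) (totalVariation_mem_caCpos ht.1))
    (hs.2.add ht.2) (Measure.absolutelyContinuous_of_le (totalVariation_sub_le s t))

theorem smul_mem_scaC (c : ℝ) (hs : s ∈ scaC 𝔓) : c • s ∈ scaC 𝔓 :=
  mem_scaC_of_absolutelyContinuous (totalVariation_mem_caCpos hs.1) hs.2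
    (totalVariation_smul_absolutelyContinuous c s)

theorem restrict_mem_scaC (hs : s ∈ scaC 𝔓) (E : Set Ω) : s.restrict E ∈ scaC 𝔓 :=
  mem_scaC_of_absolutelyContinuous (totalVariation_mem_caCpos hs.1) hs.2
    (Measure.absolutelyContinuous_of_le (totalVariation_restrict_le s E))

theorem mem_scaC_of_totalVariation_le (ht : t ∈ scaC 𝔓)
    (h : s.totalVariation ≤ t.totalVariation) : s ∈ scaC 𝔓 :=
  mem_scaC_of_absolutelyContinuous (totalVariation_mem_caCpos ht.1) ht.2
    (Measure.absolutelyContinuous_of_le h)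

end Closure

section SupClosed

variable {𝔓 : Set (Measure Ω)} {S : Set (SignedMeasure Ω)} {m : SignedMeasure Ω}

theorem totalVariation_eq_zero_of_le_restrict_compl {N : Set Ω} (hN : MeasurableSet N)
    (h : m ≤ m.restrict Nᶜ) (h₀ : ∀ A ⊆ N, MeasurableSet A → 0 ≤ m A) :
    m.totalVariation N = 0 := by
  refine (totalVariation_apply_eq_zero_iff hN).2 fun A hAN hA => le_antisymm ?_ (h₀ A hAN hA)
  have hAN' : A ∩ Nᶜ = ∅ := eq_empty_of_forall_notMem fun x hx => hx.2 (hAN hx.1)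
  simpa [VectorMeasure.restrict_apply _ hN.compl hA, hAN'] using h A hA

theorem mem_caC_of_isLeast (hS : S ⊆ caC 𝔓) (hne : S.Nonempty) (hm : IsLeast (upperBounds S) m) :
    m ∈ caC 𝔓 := by
  obtain ⟨ν₀, hν₀⟩ := hne
  intro N hN hpol
  refine totalVariation_eq_zero_of_le_restrict_compl hN (hm.2 fun ν hν => ?_) fun A hAN hA => ?_
  · rw [← restrict_compl_eq_self hN (hS hν N hN hpol)]
    exact restrict_mono_left (hm.1 hν) _
  · simpa [(totalVariation_apply_eq_zero_iff hN).1 (hS hν₀ N hN hpol) A hAN hA] using hm.1 hν₀ A hA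

/-- An upper bound `η` of the positive parts `(ν - ν₀)⁺`, `ν ∈ S`, makes `η + ν₀` an upper
bound of `S`. -/
theorem isLeast_sub {ν₀ : SignedMeasure Ω} (hS : S ⊆ scaC 𝔓) (hν₀ : ν₀ ∈ S)
    (hm : IsLeast (upperBounds S ∩ caC 𝔓) m) :
    IsLeast (upperBounds {σ | σ ∈ scaC 𝔓 ∧ 0 ≤ σ ∧ σ ≤ m - ν₀} ∩ caC 𝔓) (m - ν₀) := by
  refine ⟨⟨fun σ hσ => hσ.2.2, sub_mem_caC hm.1.2 (hS hν₀).1⟩, fun η ⟨hη, hηC⟩ => ?_⟩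
  have hm₀ : 0 ≤ m - ν₀ := sub_nonneg.2 (hm.1.1 hν₀)
  refine sub_le_iff_le_add.2 (hm.2 ⟨fun ν hν => ?_, add_mem_caC hηC (hS hν₀).1⟩)
  obtain ⟨j, -, hj₀, hjle⟩ := exists_nonneg_restrict_ge (ν - ν₀)
  have hjm : (ν - ν₀).restrict j ≤ m - ν₀ :=
    (restrict_mono_left (sub_le_sub_right (hm.1.1 hν) ν₀) j).trans (restrict_le_self hm₀ j)
  exact sub_le_iff_le_add.1
    (hjle.trans (hη ⟨restrict_mem_scaC (sub_mem_scaC (hS hν) (hS hν₀)) j, hj₀, hjm⟩))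

/-- `m` has the same null sets as the total variations of the members of `T`. -/
theorem mem_scaC_of_isLeast_of_nonneg {T : Set (SignedMeasure Ω)}
    (hT : ∀ σ ∈ T, σ ∈ scaC 𝔓 ∧ 0 ≤ σ) (hm : IsLeast (upperBounds T ∩ caC 𝔓) m) (hm₀ : 0 ≤ m) :
    m ∈ scaC 𝔓 := by
  refine ⟨hm.1.2, supported_of_polarEquiv_singleton (𝒯 := SignedMeasure.totalVariation '' T)
    (fun N hN => ?_) ?_⟩
  · simp only [Polar, mem_singleton_iff, forall_eq, forall_mem_image]
    refine ⟨fun h σ hσ => Measure.absolutelyContinuous_of_le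
      (totalVariation_mono (hT σ hσ).2 (hm.1.1 hσ)) h, fun h => ?_⟩
    refine totalVariation_eq_zero_of_le_restrict_compl hN
      (hm.2 ⟨fun σ hσ => ?_, restrict_mem_caC hm.1.2 _⟩) fun A _ hA => by simpa using hm₀ A hA
    rw [← restrict_compl_eq_self hN (h hσ)]
    exact restrict_mono_left (hm.1.1 hσ) _
  · rintro _ ⟨σ, hσ, rfl⟩
    exact (hT σ hσ).1.2

theorem mem_scaC_of_isLeast_caC (hpos : ∃ s ∈ caC 𝔓, 0 < s) (hS : S ⊆ scaC 𝔓)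
    (hm : IsLeast (upperBounds S ∩ caC 𝔓) m) : m ∈ scaC 𝔓 := by
  rcases S.eq_empty_or_nonempty with rfl | ⟨ν₀, hν₀⟩
  · obtain ⟨s, hs, hs₀⟩ := hpos
    exact ((sub_lt_self m hs₀).not_ge (hm.2 ⟨by simp, sub_mem_caC hm.1.2 hs⟩)).elim
  · have := mem_scaC_of_isLeast_of_nonneg (fun σ hσ => ⟨hσ.1, hσ.2.1⟩) (isLeast_sub hS hν₀ hm)
      (sub_nonneg.2 (hm.1.1 hν₀))
    simpa using add_mem_scaC this (hS hν₀)

theorem mem_scaC_of_isLeast (hpos : ∃ s ∈ caC 𝔓, 0 < s) (hS : S ⊆ scaC 𝔓)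
    (hm : IsLeast (upperBounds S) m) : m ∈ scaC 𝔓 := by
  rcases S.eq_empty_or_nonempty with rfl | hne
  · obtain ⟨s, -, hs₀⟩ := hpos
    exact ((sub_lt_self m hs₀).not_ge (hm.2 (by simp))).elim
  · have hmC := mem_caC_of_isLeast (fun σ hσ => (hS hσ).1) hne hm
    exact mem_scaC_of_isLeast_caC hpos hS ⟨⟨hm.1, hmC⟩, fun η hη => hm.2 hη.1⟩

theorem isBandIn_scaC {M : Set (SignedMeasure Ω)} (hM : caC 𝔓 ⊆ M)
    (hsup : ∀ S ⊆ scaC 𝔓, ∀ m, IsLeast (upperBounds S ∩ M) m → m ∈ scaC 𝔓) :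
    IsBandIn M (scaC 𝔓) :=
  ⟨fun _ hs => hM hs.1, zero_mem_scaC, fun _ hs _ ht => add_mem_scaC hs ht,
    fun c _ hs => smul_mem_scaC c hs,
    fun _ _ _ ht h => mem_scaC_of_totalVariation_le ht (Measure.le_iff.2 h),
    fun S hS m hmM h => hsup S hS m ⟨⟨h.1, hmM⟩, fun η hη => h.2 η hη.2 hη.1⟩⟩

end SupClosed

section Minimality

variable {𝔓 : Set (Measure Ω)} {M B : Set (SignedMeasure Ω)}

theorem exists_restrict_le_smul (μ Q : Measure Ω) [SigmaFinite μ] [SigmaFinite Q] :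
    ∃ E : ℕ → Set Ω, (∀ n, MeasurableSet (E n)) ∧ (∀ n, μ.restrict (E n) ≤ (n : ℝ≥0) • Q) ∧
      Q (⋃ n, E n)ᶜ = 0 := by
  have hsing := μ.mutuallySingular_singularPart Q
  set T := hsing.nullSet
  set f := μ.rnDeriv Q
  have hE : ∀ n : ℕ, MeasurableSet (T ∩ {x | f x ≤ n}) := fun n =>
    hsing.measurableSet_nullSet.inter (measurableSet_le (Measure.measurable_rnDeriv μ Q)
      measurable_const)
  refine ⟨fun n => T ∩ {x | f x ≤ n}, hE, fun n => Measure.le_iff.2 fun X hX => ?_, ?_⟩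
  · have hY := hX.inter (hE n)
    calc μ.restrict (T ∩ {x | f x ≤ n}) X
        = μ.singularPart Q (X ∩ (T ∩ {x | f x ≤ n})) +
            Q.withDensity f (X ∩ (T ∩ {x | f x ≤ n})) := by
          rw [Measure.restrict_apply hX, ← Measure.add_apply,
            ← μ.haveLebesgueDecomposition_add Q]
      _ = ∫⁻ x in X ∩ (T ∩ {x | f x ≤ n}), f x ∂Q := by
          rw [measure_mono_null (inter_subset_right.trans inter_subset_left)
            hsing.measure_nullSet, zero_add, withDensity_apply _ hY]
      _ ≤ ∫⁻ _ in X ∩ (T ∩ {x | f x ≤ n}), (n : ℝ≥0∞) ∂Q :=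
          setLIntegral_mono measurable_const fun x hx => hx.2.2
      _ ≤ ((n : ℝ≥0) • Q) X := by
          rw [setLIntegral_const, Measure.smul_apply, Measure.nnreal_smul_coe_apply,
            ENNReal.coe_natCast]
          gcongr
          exact inter_subset_left
  · refine measure_mono_null (fun x hx => ?_)
      (measure_union_null hsing.measure_compl_nullSet (ae_iff.1 (μ.rnDeriv_lt_top Q)))
    by_contra hx'
    simp only [mem_union, mem_compl_iff, mem_ofPred_eq, not_or, not_not, not_lt,
      top_le_iff] at hx'
    obtain ⟨n, hn⟩ := ENNReal.exists_nat_gt hx'.2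
    exact hx (mem_iUnion.2 ⟨n, hx'.1, hn.le⟩)

/-- `Wᶜ ∩ S` is null for every `Q ∈ 𝔔`, hence polar, hence `μ`-null. -/
theorem measure_compl_eq_zero_of_forall_diff {𝔔 : Set (Measure Ω)} {μ : Measure Ω}
    {S W : Set Ω} {U : Measure Ω → Set Ω} (hμ : ∀ N, MeasurableSet N → Polar 𝔓 N → μ N = 0)
    (hS : IsOrderSupport 𝔓 μ S) (hequiv : PolarEquiv 𝔓 𝔔) (hU : ∀ Q ∈ 𝔔, MeasurableSet (U Q))
    (hUc : ∀ Q ∈ 𝔔, Q (U Q)ᶜ = 0) (hW : MeasurableSet W) (hUW : ∀ Q ∈ 𝔔, μ (U Q \ W) = 0) :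
    μ Wᶜ = 0 := by
  obtain ⟨hSm, hSc, hpolar⟩ := hS
  have hX : Polar 𝔓 (Wᶜ ∩ S) := by
    refine (hequiv _ (hW.compl.inter hSm)).2 fun Q hQ => measure_mono_null
      (t := (U Q \ W) ∩ S ∪ (U Q)ᶜ) (fun x hx => by by_cases x ∈ U Q <;> simp_all)
      (measure_union_null ?_ (hUc Q hQ))
    exact (hequiv _ (((hU Q hQ).diff hW).inter hSm)).1 (hpolar _ ((hU Q hQ).diff hW)
      (measure_mono_null inter_subset_left (hUW Q hQ))) Q hQ
  exact measure_mono_null (t := Wᶜ ∩ S ∪ Sᶜ) (fun x hx => by by_cases x ∈ S <;> simp_all)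
    (measure_union_null (hμ _ (hW.compl.inter hSm) hX) hSc)

theorem IsBandIn.toSignedMeasure_mem_of_le (hB : IsBandIn M B) {μ ν : Measure Ω}
    [IsFiniteMeasure μ] [IsFiniteMeasure ν] (hμ : μ.toSignedMeasure ∈ M)
    (hν : ν.toSignedMeasure ∈ B) (h : μ ≤ ν) : μ.toSignedMeasure ∈ B :=
  hB.2.2.2.2.1 _ hμ _ hν fun A hA => by
    simpa only [totalVariation_toSignedMeasure] using Measure.le_iff.1 h A hA

section Restrict

variable {μ : Measure Ω} [IsFiniteMeasure μ]

theorem IsBandIn.restrict_union_mem (hB : IsBandIn M B)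
    (hμM : ∀ X, (μ.restrict X).toSignedMeasure ∈ M) {X Y : Set Ω}
    (hX : (μ.restrict X).toSignedMeasure ∈ B) (hY : (μ.restrict Y).toSignedMeasure ∈ B) :
    (μ.restrict (X ∪ Y)).toSignedMeasure ∈ B :=
  hB.toSignedMeasure_mem_of_le (hμM _)
    (by rw [Measure.toSignedMeasure_add]; exact hB.2.2.1 _ hX _ hY) (Measure.restrict_union_le X Y)

theorem IsBandIn.restrict_iUnion_mem_of_monotone (hB : IsBandIn M B)
    (hμM : ∀ X, (μ.restrict X).toSignedMeasure ∈ M) {A : ℕ → Set Ω} (hA : Monotone A)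
    (hAB : ∀ n, (μ.restrict (A n)).toSignedMeasure ∈ B) :
    (μ.restrict (⋃ n, A n)).toSignedMeasure ∈ B := by
  refine hB.2.2.2.2.2 (range fun n => (μ.restrict (A n)).toSignedMeasure) (range_subset_iff.2 hAB)
    _ (hμM _) ⟨?_, fun η _ hη X hX => ?_⟩
  · rintro _ ⟨n, rfl⟩
    exact (Measure.toSignedMeasure_le_toSignedMeasure_iff _ _).2
      (Measure.restrict_mono_set μ (subset_iUnion A n))
  · have hlim := tendsto_measure_iUnion_atTop (μ := μ)
      (fun k n hkn => inter_subset_inter_right X (hA hkn))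
    rw [Measure.toSignedMeasure_apply_measurable hX, measureReal_def, Measure.restrict_apply hX,
      inter_iUnion]
    refine le_of_tendsto' ((ENNReal.tendsto_toReal (measure_ne_top _ _)).comp hlim) fun n => ?_
    simpa [Measure.toSignedMeasure_apply_measurable hX, measureReal_def,
      Measure.restrict_apply hX] using hη _ (mem_range_self n) X hX

theorem IsBandIn.restrict_iUnion_mem (hB : IsBandIn M B)
    (hμM : ∀ X, (μ.restrict X).toSignedMeasure ∈ M) {A : ℕ → Set Ω}
    (hAB : ∀ n, (μ.restrict (A n)).toSignedMeasure ∈ B) :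
    (μ.restrict (⋃ n, A n)).toSignedMeasure ∈ B := by
  rw [← iUnion_accumulate]
  refine hB.restrict_iUnion_mem_of_monotone hμM monotone_accumulate fun n => ?_
  induction n with
  | zero => simpa [accumulate_zero_nat] using hAB 0
  | succ n ih => rw [accumulate_succ]; exact hB.restrict_union_mem hμM ih (hAB _)

theorem IsBandIn.restrict_biUnion_mem (hB : IsBandIn M B)
    (hμM : ∀ X, (μ.restrict X).toSignedMeasure ∈ M) {ι : Type*} {J : Set ι} (hJ : J.Countable)
    {A : ι → Set Ω} (hAB : ∀ i ∈ J, (μ.restrict (A i)).toSignedMeasure ∈ B) :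
    (μ.restrict (⋃ i ∈ J, A i)).toSignedMeasure ∈ B := by
  rcases J.eq_empty_or_nonempty with rfl | hne
  · simpa using hB.2.1
  · obtain ⟨f, rfl⟩ := hJ.exists_eq_range hne
    rw [biUnion_range]
    exact hB.restrict_iUnion_mem hμM fun n => hAB _ (mem_range_self n)

end Restrict

theorem toSignedMeasure_mem_toSgn {𝔔 : Set (Measure Ω)} {Q : Measure Ω} [IsFiniteMeasure Q]
    (hQ : Q ∈ 𝔔) : Q.toSignedMeasure ∈ toSgn 𝔔 :=
  ⟨Q, hQ, fun A hA => by rw [Measure.toSignedMeasure_apply_measurable hA, measureReal_def]⟩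

theorem scaC_subset_of_isBandIn {𝔔 : Set (Measure Ω)} (h𝔔 : ∀ Q ∈ 𝔔, IsProbabilityMeasure Q)
    (hequiv : PolarEquiv 𝔓 𝔔) (hM : caC 𝔓 ⊆ M) (hB : IsBandIn M B) (hG : toSgn 𝔔 ⊆ B) :
    scaC 𝔓 ⊆ B := by
  intro m ⟨hmC, S, hS⟩
  set μ := m.totalVariation
  have hμM : ∀ X, (μ.restrict X).toSignedMeasure ∈ M := fun X => hM fun N hN hpol => by
    rw [totalVariation_toSignedMeasure, Measure.restrict_apply hN]
    exact measure_mono_null inter_subset_left (hmC N hN hpol)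
  have hE : ∀ Q ∈ 𝔔, ∃ E : ℕ → Set Ω, (∀ n, MeasurableSet (E n)) ∧
      (∀ n, (μ.restrict (E n)).toSignedMeasure ∈ B) ∧ Q (⋃ n, E n)ᶜ = 0 := by
    intro Q hQ
    have := h𝔔 Q hQ
    obtain ⟨E, hEm, hle, hc⟩ := exists_restrict_le_smul μ Q
    refine ⟨E, hEm, fun n => hB.toSignedMeasure_mem_of_le (hμM _) ?_ (hle n), hc⟩
    rw [Measure.toSignedMeasure_smul, NNReal.smul_def]
    exact hB.2.2.2.1 _ _ (hG (toSignedMeasure_mem_toSgn hQ))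
  choose! E hEm hEB hEc using hE
  obtain ⟨J, hJ𝔔, hJc, hJ⟩ := exists_countable_measure_diff_biUnion_eq_zero μ
    (U := fun Q => ⋃ n, E Q n) fun Q hQ => .iUnion (hEm Q hQ)
  have hW : MeasurableSet (⋃ Q ∈ J, ⋃ n, E Q n) := .biUnion hJc fun Q hQ => .iUnion (hEm Q (hJ𝔔 hQ))
  have hμW : μ.restrict (⋃ Q ∈ J, ⋃ n, E Q n) = μ := Measure.restrict_eq_self_of_ae_mem <|
    ae_iff.2 <| measure_compl_eq_zero_of_forall_diff hmC hS hequiv (fun Q hQ => .iUnion (hEm Q hQ))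
      hEc hW hJ
  have hμB : μ.toSignedMeasure ∈ B := Measure.toSignedMeasure_congr hμW ▸
    hB.restrict_biUnion_mem hμM hJc fun Q hQ => hB.restrict_iUnion_mem hμM (hEB Q (hJ𝔔 hQ))
  exact hB.2.2.2.2.1 m (hM hmC) _ hμB fun A _ => by rw [totalVariation_toSignedMeasure]

theorem isBandGenBy_scaC {𝔔 : Set (Measure Ω)}
    (h𝔔 : ∀ Q ∈ 𝔔, IsProbabilityMeasure Q) (hequiv : PolarEquiv 𝔓 𝔔)
    (hG : toSgn 𝔔 ⊆ scaC 𝔓) (hM : caC 𝔓 ⊆ M)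
    (hsup : ∀ S ⊆ scaC 𝔓, ∀ m, IsLeast (upperBounds S ∩ M) m → m ∈ scaC 𝔓) :
    IsBandGenBy M (scaC 𝔓) (toSgn 𝔔) :=
  ⟨isBandIn_scaC hM hsup, hG, fun _ hB hGB => scaC_subset_of_isBandIn h𝔔 hequiv hM hB hGB⟩

end Minimality

section Majorised

open ProbabilityTheory

variable {𝔓 𝔔 : Set (Measure Ω)}

theorem supported_of_majorised (hequiv : PolarEquiv 𝔓 𝔔) (hmaj : Majorised 𝔔) :
    ∀ Q ∈ 𝔔, Supported 𝔓 Q := by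
  obtain ⟨μ, hμ⟩ := hmaj
  have hμS : IsOrderSupport 𝔓 μ univ := ⟨.univ, by simp, fun N hN hN0 =>
    (hequiv _ (hN.inter .univ)).2 fun Q hQ => by
      obtain ⟨f, -, rfl⟩ := hμ Q hQ
      exact withDensity_absolutelyContinuous μ f hN0⟩
  intro Q hQ
  obtain ⟨f, hf, rfl⟩ := hμ Q hQ
  exact ⟨_, hμS.withDensity hf⟩

theorem toSignedMeasure_mem_caC {Q : Measure Ω} [IsFiniteMeasure Q] (hQ : Q ∈ 𝔔)
    (hequiv : PolarEquiv 𝔓 𝔔) : Q.toSignedMeasure ∈ caC 𝔓 := fun N hN hpol => by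
  rw [totalVariation_toSignedMeasure]
  exact (hequiv N hN).1 hpol Q hQ

theorem toSignedMeasure_pos {Q : Measure Ω} [IsFiniteMeasure Q] (hQ : Q ≠ 0) :
    0 < Q.toSignedMeasure :=
  (Measure.zero_le_toSignedMeasure Q).lt_of_ne fun h => hQ <|
    (Measure.toSignedMeasure_eq_toSignedMeasure_iff (μ := Q) (ν := 0)).1 (by simp [← h])

theorem toSgn_subset_scaC (h𝔔 : ∀ Q ∈ 𝔔, IsProbabilityMeasure Q) (hequiv : PolarEquiv 𝔓 𝔔)
    (hsupp : ∀ Q ∈ 𝔔, Supported 𝔓 Q) : toSgn 𝔔 ⊆ scaC 𝔓 := by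
  rintro s ⟨Q, hQ, hsQ⟩
  have := h𝔔 Q hQ
  obtain rfl : s = Q.toSignedMeasure := VectorMeasure.ext fun A hA => by
    rw [hsQ A hA, Measure.toSignedMeasure_apply_measurable hA, measureReal_def]
  refine ⟨toSignedMeasure_mem_caC hQ hequiv, ?_⟩
  rw [totalVariation_toSignedMeasure]
  exact hsupp Q hQ

theorem sum_restrict_restrict_of_pairwise {ι : Type*} {μ : ι → Measure Ω} {B : ι → Set Ω}
    (hB : ∀ i, MeasurableSet (B i)) (h : Pairwise fun i j => μ j (B i ∩ B j) = 0) (i : ι) :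
    (Measure.sum fun j => (μ j).restrict (B j)).restrict (B i) = (μ i).restrict (B i) := by
  ext X hX
  rw [Measure.restrict_apply hX, Measure.sum_apply _ (hX.inter (hB i)),
    tsum_eq_single i fun j hj => ?_, Measure.restrict_apply (hX.inter (hB i)),
    inter_assoc, inter_self, Measure.restrict_apply hX]
  rw [Measure.restrict_apply (hX.inter (hB i)), inter_assoc]
  exact measure_mono_null inter_subset_right (h hj.symm)

/-- The majorising measure is the sum of the restrictions `p.1.restrict p.2`. -/
theorem majorised_image_cond {F : Set (Measure Ω × Set Ω)} (hB : ∀ p ∈ F, MeasurableSet p.2)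
    (h : F.Pairwise fun p q => q.1 (p.2 ∩ q.2) = 0) : Majorised ((fun p => p.1[|p.2]) '' F) := by
  refine ⟨Measure.sum fun p : F => p.1.1.restrict p.1.2, ?_⟩
  rintro _ ⟨p, hp, rfl⟩
  refine ⟨p.2.indicator fun _ => (p.1 p.2)⁻¹, measurable_const.indicator (hB p hp), ?_⟩
  rw [withDensity_indicator (hB p hp), withDensity_const,
    sum_restrict_restrict_of_pairwise (μ := fun q : F => q.1.1) (B := fun q : F => q.1.2)
      (fun q => hB q q.2) (fun q r hqr => h q.2 r.2 (Subtype.coe_injective.ne hqr)) ⟨p, hp⟩]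
  rfl

def IsSupportPacking (𝔓 𝔔 : Set (Measure Ω)) (F : Set (Measure Ω × Set Ω)) : Prop :=
  (∀ p ∈ F, p.1 ∈ 𝔔 ∧ MeasurableSet p.2 ∧ p.1 p.2 ≠ 0 ∧
    ∀ N, MeasurableSet N → p.1 (N ∩ p.2) = 0 → Polar 𝔓 (N ∩ p.2)) ∧
  F.Pairwise fun p q => Polar 𝔓 (p.2 ∩ q.2)

theorem exists_maximal_isSupportPacking (𝔓 𝔔 : Set (Measure Ω)) :
    ∃ F, Maximal (IsSupportPacking 𝔓 𝔔) F :=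
  zorn_subset {F | IsSupportPacking 𝔓 𝔔 F} fun c hc hchain =>
    ⟨⋃₀ c, ⟨fun p ⟨_, hF, hp⟩ => (hc hF).1 p hp,
      (pairwise_sUnion hchain.directedOn).2 fun _ hF => (hc hF).2⟩, fun _ => subset_sUnion_of_mem⟩

/-- Otherwise some `Q ∈ 𝔔` charges `N`, and `(Q, N ∩ S)` with `S` a support of `Q` could be
added to the packing. -/
theorem polar_of_maximal_isSupportPacking {F : Set (Measure Ω × Set Ω)}
    (hF : Maximal (IsSupportPacking 𝔓 𝔔) F) (hequiv : PolarEquiv 𝔓 𝔔)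
    (hsupp : ∀ Q ∈ 𝔔, Supported 𝔓 Q) {N : Set Ω} (hN : MeasurableSet N)
    (hNF : ∀ p ∈ F, p.1 (N ∩ p.2) = 0) : Polar 𝔓 N := by
  by_contra hNpol
  obtain ⟨Q, hQ, hQN⟩ : ∃ Q ∈ 𝔔, Q N ≠ 0 := by simpa [Polar] using mt (hequiv N hN).2 hNpol
  obtain ⟨S, hSm, hSc, hSpol⟩ := hsupp Q hQ
  have hQNS : Q (N ∩ S) ≠ 0 := fun h => hQN <| measure_mono_null (t := N ∩ S ∪ Sᶜ)
    (fun x hx => by by_cases x ∈ S <;> simp_all) (measure_union_null h hSc)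
  have hpolar : ∀ p ∈ F, Polar 𝔓 (N ∩ S ∩ p.2) := fun p hp =>
    fun P hP => measure_mono_null (inter_subset_inter_left _ inter_subset_left)
      ((hF.1.1 p hp).2.2.2 N hN (hNF p hp) P hP)
  have hnew : IsSupportPacking 𝔓 𝔔 (insert (Q, N ∩ S) F) := by
    refine ⟨?_, hF.1.2.insert fun p hp _ => ⟨hpolar p hp, inter_comm p.2 _ ▸ hpolar p hp⟩⟩
    rintro p (rfl | hp)
    · refine ⟨hQ, hN.inter hSm, hQNS, fun N' hN' h => ?_⟩
      simpa only [inter_assoc] using hSpol (N' ∩ N) (hN'.inter hN) (by rwa [inter_assoc])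
    · exact hF.1.1 p hp
  exact hQNS (by simpa [← inter_assoc] using hNF _ (hF.2 hnew (subset_insert _ F) (mem_insert _ F)))

theorem majorised_of_classS (hC : ClassS 𝔓) :
    ∃ 𝔔 : Set (Measure Ω), 𝔔.Nonempty ∧ (∀ Q ∈ 𝔔, IsProbabilityMeasure Q) ∧
      PolarEquiv 𝔓 𝔔 ∧ Majorised 𝔔 := by
  obtain ⟨𝔔, ⟨Q₀, hQ₀⟩, h𝔔, hequiv, hsupp⟩ := hC
  obtain ⟨F, hF⟩ := exists_maximal_isSupportPacking 𝔓 𝔔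
  have hpack := hF.1.1
  have hpolar : ∀ N, MeasurableSet N → (∀ p ∈ F, p.1 (N ∩ p.2) = 0) → Polar 𝔓 N :=
    fun N hN => polar_of_maximal_isSupportPacking hF hequiv hsupp hN
  have hfin : ∀ p ∈ F, p.1 p.2 ≠ ⊤ := fun p hp => by
    have := h𝔔 _ (hpack p hp).1
    exact measure_ne_top _ _
  have hmaj : Majorised ((fun p : Measure Ω × Set Ω => p.1[|p.2]) '' F) :=
    majorised_image_cond (fun p hp => (hpack p hp).2.1) fun p hp q hq hpq =>
      (hequiv _ ((hpack p hp).2.1.inter (hpack q hq).2.1)).1 (hF.1.2 hp hq hpq) q.1 (hpack q hq).1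
  refine ⟨_, ?_, ?_, fun N hN => ⟨fun hNpol => ?_, fun hNpol => ?_⟩, hmaj⟩
  · refine (F.eq_empty_or_nonempty.resolve_left fun hF₀ => ?_).image _
    have := h𝔔 Q₀ hQ₀
    simpa using (hequiv _ .univ).1 (hpolar univ .univ (by simp [hF₀])) Q₀ hQ₀
  · rintro _ ⟨p, hp, rfl⟩
    have := h𝔔 _ (hpack p hp).1
    exact cond_isProbabilityMeasure (hpack p hp).2.2.1
  · rintro _ ⟨p, hp, rfl⟩
    rw [cond_apply (hpack p hp).2.1, measure_mono_null inter_subset_right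
      ((hequiv N hN).1 hNpol p.1 (hpack p hp).1), mul_zero]
  · refine hpolar N hN fun p hp => ?_
    have := hNpol _ ⟨p, hp, rfl⟩
    rwa [cond_apply (hpack p hp).2.1, mul_eq_zero, ENNReal.inv_eq_zero, inter_comm,
      or_iff_right (hfin p hp)] at this

end Majorised

theorem classS_iff_majorised_and_band_general
    {Ω : Type*} [MeasurableSpace Ω] (𝔓 : Set (Measure Ω)) :
    (ClassS 𝔓 ↔
      ∃ 𝔔 : Set (Measure Ω), 𝔔.Nonempty ∧ (∀ Q ∈ 𝔔, IsProbabilityMeasure Q) ∧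
        PolarEquiv 𝔓 𝔔 ∧ Majorised 𝔔) ∧
    (∀ 𝔔 : Set (Measure Ω), 𝔔.Nonempty → (∀ Q ∈ 𝔔, IsProbabilityMeasure Q) →
      PolarEquiv 𝔓 𝔔 → Majorised 𝔔 →
        IsBandGenBy (caC 𝔓) (scaC 𝔓) (toSgn 𝔔) ∧
        IsBandGenBy Set.univ (scaC 𝔓) (toSgn 𝔔)) := by
  refine ⟨⟨majorised_of_classS, fun ⟨𝔔, hne, h𝔔, hequiv, hmaj⟩ =>
    ⟨𝔔, hne, h𝔔, hequiv, supported_of_majorised hequiv hmaj⟩⟩, ?_⟩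
  intro 𝔔 ⟨Q₀, hQ₀⟩ h𝔔 hequiv hmaj
  have := h𝔔 Q₀ hQ₀
  have hpos : ∃ s ∈ caC 𝔓, 0 < s :=
    ⟨_, toSignedMeasure_mem_caC hQ₀ hequiv, toSignedMeasure_pos (IsProbabilityMeasure.ne_zero Q₀)⟩
  have hG := toSgn_subset_scaC h𝔔 hequiv (supported_of_majorised hequiv hmaj)
  exact ⟨isBandGenBy_scaC h𝔔 hequiv hG subset_rfl fun S hS m => mem_scaC_of_isLeast_caC hpos hS,
    isBandGenBy_scaC h𝔔 hequiv hG (subset_univ _) fun S hS m hm =>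
      mem_scaC_of_isLeast hpos hS (by simpa using hm)⟩

/-- Lemma (lem:Luschgy): `𝔓` is of class (S) iff some equivalent set of probability measures
is majorised; and in that case `sca_𝐜` is the band generated by `𝔔` both in `ca_𝐜` and
in `ca`. -/
theorem classS_iff_majorised_and_band
    {Ω : Type*} [MeasurableSpace Ω] (𝔓 : Set (Measure Ω)) (h𝔓 : 𝔓.Nonempty)
    (hprob : ∀ P ∈ 𝔓, IsProbabilityMeasure P) :
    (ClassS 𝔓 ↔
      ∃ 𝔔 : Set (Measure Ω), 𝔔.Nonempty ∧ (∀ Q ∈ 𝔔, IsProbabilityMeasure Q) ∧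
        PolarEquiv 𝔓 𝔔 ∧ Majorised 𝔔) ∧
    (∀ 𝔔 : Set (Measure Ω), 𝔔.Nonempty → (∀ Q ∈ 𝔔, IsProbabilityMeasure Q) →
      PolarEquiv 𝔓 𝔔 → Majorised 𝔔 →
        IsBandGenBy (caC 𝔓) (scaC 𝔓) (toSgn 𝔔) ∧
        IsBandGenBy Set.univ (scaC 𝔓) (toSgn 𝔔)) :=
  classS_iff_majorised_and_band_general 𝔓

end Robust
end

section
/- Suppose 𝔓 is of class (S). Then there exists a supported alternative 𝔔 ≈ 𝔓 such that Q ∧ Q' = 0 holds in the lattice ca_𝐜 for all distinct Q, Q' ∈ 𝔔; equivalently, 1_{S(Q)} ∧ 1_{S(Q')} = 0 in L^∞_𝐜 for all distinct Q, Q' ∈ 𝔔 (a 'disjoint supported alternative'). -/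
open MeasureTheory Set Filter

namespace Robust

universe u

variable {Ω : Type*} [MeasurableSpace Ω]

/-!
Apply Zorn's lemma to the families of probability measures that vanish on `𝔓`-polar events and
whose order supports pairwise meet in `𝔓`-polar sets. A maximal family `R` is equivalent to `𝔓`:
if an event `N` were `R`-polar but not `𝔓`-polar, some `Q₀` in a supported alternative charges
`N`, and `Q₀` conditioned on `N`, with order support `N ∩ S(Q₀)`, could be added to `R`. Supports
meeting in a polar set make two members of `R` mutually singular, so their infimum is `0`.
-/

open ProbabilityTheory

section OrderSupports

variable {𝔓 𝔔 R : Set (Measure Ω)} {μ ν : Measure Ω} {S T : Set Ω}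

theorem Polar.mono (h : S ⊆ T) (hT : Polar 𝔓 T) : Polar 𝔓 S :=
  fun P hP => measure_mono_null h (hT P hP)

theorem Polar.union (hS : Polar 𝔓 S) (hT : Polar 𝔓 T) : Polar 𝔓 (S ∪ T) :=
  fun P hP => measure_union_null (hS P hP) (hT P hP)

theorem IsSuppAlt.nonempty_of_polarEquiv (h𝔔 : IsSuppAlt 𝔓 𝔔) (hR : PolarEquiv 𝔓 R) :
    R.Nonempty := by
  rw [nonempty_iff_ne_empty]
  rintro rfl
  obtain ⟨⟨Q, hQ⟩, hprob, h𝔓𝔔, -⟩ := h𝔔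
  have hpolar : Polar 𝔓 univ := (hR univ .univ).2 fun _ => False.elim
  exact (hprob Q hQ).ne_zero Q (Measure.measure_univ_eq_zero.1 ((h𝔓𝔔 univ .univ).1 hpolar Q hQ))

namespace IsOrderSupport

theorem polar_inter_of_null (hS : IsOrderSupport 𝔓 μ S) {N : Set Ω} (hN : MeasurableSet N)
    (hμN : μ N = 0) : Polar 𝔓 (N ∩ S) :=
  hS.2.2 N hN (measure_mono_null inter_subset_left hμN)

theorem polar_diff (hS : IsOrderSupport 𝔓 μ S) (hT : IsOrderSupport 𝔓 μ T) :
    Polar 𝔓 (S \ T) := by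
  rw [sdiff_eq, inter_comm]
  exact hS.polar_inter_of_null hT.1.compl hT.2.1

theorem cond_inter [IsFiniteMeasure μ] (hS : IsOrderSupport 𝔓 μ S) {A : Set Ω}
    (hA : MeasurableSet A) : IsOrderSupport 𝔓 μ[|A] (A ∩ S) := by
  refine ⟨hA.inter hS.1, ?_, fun N hN hN0 => ?_⟩
  · rw [compl_inter]
    exact measure_union_null (ae_cond_mem hA) (cond_absolutelyContinuous hS.2.1)
  · have hμ : μ (A ∩ (N ∩ (A ∩ S))) = 0 := by
      by_contra hne
      exact (cond_pos_of_inter_ne_zero hA hne).ne' hN0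
    have hset : A ∩ (N ∩ (A ∩ S)) = (N ∩ A) ∩ S := by
      ext x
      simp only [mem_inter_iff]
      tauto
    rw [hset] at hμ
    rw [← inter_assoc]
    exact hS.2.2 _ (hN.inter hA) hμ

end IsOrderSupport

def PolarDisjoint (𝔓 : Set (Measure Ω)) (μ ν : Measure Ω) : Prop :=
  ∀ S S', IsOrderSupport 𝔓 μ S → IsOrderSupport 𝔓 ν S' → Polar 𝔓 (S ∩ S')

theorem PolarDisjoint.symm (h : PolarDisjoint 𝔓 μ ν) : PolarDisjoint 𝔓 ν μ :=
  fun S S' hS hS' => inter_comm S S' ▸ h S' S hS' hS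

/-- Order supports are unique up to polar sets, so one pair of versions suffices. -/
theorem polarDisjoint_of_isOrderSupport {T' : Set Ω} (hT : IsOrderSupport 𝔓 μ T)
    (hT' : IsOrderSupport 𝔓 ν T') (h : Polar 𝔓 (T ∩ T')) : PolarDisjoint 𝔓 μ ν := by
  intro S S' hS hS'
  refine (h.union ((hS.polar_diff hT).union (hS'.polar_diff hT'))).mono ?_
  rintro x ⟨hxS, hxS'⟩
  by_cases hxT : x ∈ T <;> by_cases hxT' : x ∈ T' <;> simp_all

theorem PolarDisjoint.inf_eq_zero (h : PolarDisjoint 𝔓 μ ν)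
    (hμ : ∀ N, MeasurableSet N → Polar 𝔓 N → μ N = 0) (hS : IsOrderSupport 𝔓 μ S)
    (hS' : IsOrderSupport 𝔓 ν T) : μ ⊓ ν = 0 := by
  have hμT : μ T = 0 := by
    refine measure_mono_null (fun x hx => ?_) (measure_union_null
      (hμ _ (hS.1.inter hS'.1) (h S T hS hS')) hS.2.1)
    by_cases hxS : x ∈ S <;> simp_all
  have hsing : μ ⟂ₘ ν := ⟨T, hS'.1, hμT, hS'.2.1⟩
  exact disjoint_iff.mp hsing.disjoint

end OrderSupports

section DisjointFamilies

variable {𝔓 𝔔 R : Set (Measure Ω)}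

def IsDisjointSupportedFamily (𝔓 R : Set (Measure Ω)) : Prop :=
  (∀ Q ∈ R, IsProbabilityMeasure Q ∧ Supported 𝔓 Q) ∧
    (∀ N, MeasurableSet N → Polar 𝔓 N → Polar R N) ∧ R.Pairwise (PolarDisjoint 𝔓)

theorem isDisjointSupportedFamily_sUnion {c : Set (Set (Measure Ω))}
    (hc : ∀ R ∈ c, IsDisjointSupportedFamily 𝔓 R) (hchain : IsChain (· ⊆ ·) c) :
    IsDisjointSupportedFamily 𝔓 (⋃₀ c) := by
  refine ⟨?_, fun N hN hpolar => ?_,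
    (pairwise_sUnion hchain.directedOn).2 fun R hR => (hc R hR).2.2⟩
  · rintro Q ⟨R, hR, hQ⟩
    exact (hc R hR).1 Q hQ
  · rintro Q ⟨R, hR, hQ⟩
    exact (hc R hR).2.1 N hN hpolar Q hQ

theorem IsDisjointSupportedFamily.insert (hR : IsDisjointSupportedFamily 𝔓 R) {Q : Measure Ω}
    [IsProbabilityMeasure Q] {A N : Set Ω} (hA : IsOrderSupport 𝔓 Q A)
    (hQ : ∀ M, MeasurableSet M → Polar 𝔓 M → Q M = 0) (hAN : A ⊆ N) (hN : MeasurableSet N)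
    (hRN : Polar R N) : IsDisjointSupportedFamily 𝔓 (insert Q R) := by
  obtain ⟨hsupp, hnull, hdisj⟩ := hR
  have hQR : ∀ Q' ∈ R, PolarDisjoint 𝔓 Q Q' := by
    intro Q' hQ'
    obtain ⟨S', hS'⟩ := (hsupp Q' hQ').2
    have hNS' : Polar 𝔓 (N ∩ S') := hS'.polar_inter_of_null hN (hRN Q' hQ')
    exact polarDisjoint_of_isOrderSupport hA hS' (hNS'.mono (inter_subset_inter_left _ hAN))
  refine ⟨forall_mem_insert.2 ⟨⟨‹_›, A, hA⟩, hsupp⟩,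
    fun M hM hpolar => forall_mem_insert.2 ⟨hQ M hM hpolar, hnull M hM hpolar⟩,
    pairwise_insert.2 ⟨hdisj, fun Q' hQ' _ => ⟨hQR Q' hQ', (hQR Q' hQ').symm⟩⟩⟩

/-- The witness is a measure of the alternative conditioned on `N`. -/
theorem IsSuppAlt.exists_isOrderSupport_subset (h𝔔 : IsSuppAlt 𝔓 𝔔) {N : Set Ω}
    (hN : MeasurableSet N) (hNP : ¬ Polar 𝔓 N) :
    ∃ Q : Measure Ω, ∃ A ⊆ N, IsProbabilityMeasure Q ∧ IsOrderSupport 𝔓 Q A ∧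
      ∀ M, MeasurableSet M → Polar 𝔓 M → Q M = 0 := by
  obtain ⟨-, hprob, hequiv, hsupp⟩ := h𝔔
  obtain ⟨Q₀, hQ₀, hQ₀N⟩ : ∃ Q₀ ∈ 𝔔, Q₀ N ≠ 0 := by
    by_contra! h
    exact hNP ((hequiv N hN).2 h)
  have := hprob Q₀ hQ₀
  obtain ⟨S₀, hS₀⟩ := hsupp Q₀ hQ₀
  exact ⟨Q₀[|N], N ∩ S₀, inter_subset_left, cond_isProbabilityMeasure hQ₀N, hS₀.cond_inter hN,
    fun M hM hpolar => cond_absolutelyContinuous ((hequiv M hM).1 hpolar Q₀ hQ₀)⟩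

theorem IsDisjointSupportedFamily.polarEquiv_of_maximal
    (hR : Maximal (IsDisjointSupportedFamily 𝔓) R) (h𝔔 : IsSuppAlt 𝔓 𝔔) : PolarEquiv 𝔓 R := by
  refine fun N hN => ⟨hR.prop.2.1 N hN, fun hRN => ?_⟩
  by_contra hNP
  obtain ⟨Q, A, hAN, hQprob, hA, hQ⟩ := h𝔔.exists_isOrderSupport_subset hN hNP
  have hQR : Q ∈ R := hR.2 (hR.prop.insert hA hQ hAN hN hRN) (subset_insert Q R) (mem_insert Q R)
  have hQA : Q A = 1 := (prob_compl_eq_zero_iff hA.1).1 hA.2.1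
  exact one_ne_zero (hQA ▸ measure_mono_null hAN (hRN Q hQR))

end DisjointFamilies

theorem exists_disjoint_supported_alternative_general
    {Ω : Type*} [MeasurableSpace Ω] (𝔓 : Set (Measure Ω)) (hS : ClassS 𝔓) :
    ∃ 𝔔 : Set (Measure Ω), IsSuppAlt 𝔓 𝔔 ∧
      ∀ Q ∈ 𝔔, ∀ Q' ∈ 𝔔, Q ≠ Q' →
        Q ⊓ Q' = (0 : Measure Ω) ∧
        ∀ S S' : Set Ω, IsOrderSupport 𝔓 Q S → IsOrderSupport 𝔓 Q' S' →
          Polar 𝔓 (S ∩ S') := by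
  obtain ⟨𝔔, h𝔔⟩ := hS
  obtain ⟨R, hR⟩ := zorn_subset {R | IsDisjointSupportedFamily 𝔓 R} fun c hc hchain =>
    ⟨⋃₀ c, isDisjointSupportedFamily_sUnion hc hchain, fun _ => subset_sUnion_of_mem⟩
  have hequiv : PolarEquiv 𝔓 R := IsDisjointSupportedFamily.polarEquiv_of_maximal hR h𝔔
  obtain ⟨hsupp, hnull, hdisj⟩ := hR.prop
  refine ⟨R, ⟨h𝔔.nonempty_of_polarEquiv hequiv, fun Q hQ => (hsupp Q hQ).1, hequiv,
    fun Q hQ => (hsupp Q hQ).2⟩, fun Q hQ Q' hQ' hne => ⟨?_, hdisj hQ hQ' hne⟩⟩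
  obtain ⟨S, hS⟩ := (hsupp Q hQ).2
  obtain ⟨S', hS'⟩ := (hsupp Q' hQ').2
  exact (hdisj hQ hQ' hne).inf_eq_zero (fun N hN hpolar => hnull N hN hpolar Q hQ) hS hS'

/-- Lemma (lem:disjoint:sup:alt): if `𝔓` is of class (S), there is a disjoint supported
alternative `𝔔 ≈ 𝔓`: for distinct `Q, Q' ∈ 𝔔`, the lattice infimum `Q ⊓ Q'` is `0` in the
lattice of measures; equivalently, the indicators of any versions of their order supports
satisfy `1_{S(Q)} ∧ 1_{S(Q')} = 0` in `L^∞_𝐜`. -/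
theorem exists_disjoint_supported_alternative
    {Ω : Type*} [MeasurableSpace Ω] (𝔓 : Set (Measure Ω)) (h𝔓 : 𝔓.Nonempty)
    (hprob : ∀ P ∈ 𝔓, IsProbabilityMeasure P) (hS : ClassS 𝔓) :
    ∃ 𝔔 : Set (Measure Ω), IsSuppAlt 𝔓 𝔔 ∧
      ∀ Q ∈ 𝔔, ∀ Q' ∈ 𝔔, Q ≠ Q' →
        Q ⊓ Q' = (0 : Measure Ω) ∧
        ∀ S S' : Set Ω, IsOrderSupport 𝔓 Q S → IsOrderSupport 𝔓 Q' S' →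
          Polar 𝔓 (S ∩ S') :=
  exists_disjoint_supported_alternative_general 𝔓 hS

end Robust
end

section
/- Let P* be a probability measure on (Ω,𝓕) and let ∅ ≠ 𝒞 be a solid subset of the positive cone L⁰_{P*,+} of L⁰_{P*} (solid: X∈𝒞 and 0 ⪯ Y ⪯ X imply Y∈𝒞). Then 𝒞 is closed with respect to convergence in probability under P* if and only if 𝒞 is order closed. -/
/-!
In `L⁰` of a probability space, order convergence and almost sure convergence are tied together
along sequences. A sequence converging almost surely order converges, dominated by its tail
suprema `⨆ j, |fₖ₊ⱼ - f|`; and since convergence in probability gives an almost surely convergent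
subsequence, order closed sets are closed in probability. Conversely, if `Yα ↓ 0` dominates an order
convergent net, the integrals of `min Yα 1` decrease to their infimum along an increasing sequence
`αₙ`, and `⨅ₙ min Yαₙ 1` is then an essential lower bound of the whole net, hence `0`; so `Xαₙ`
converges almost surely, and therefore in probability, to the order limit.
-/

open MeasureTheory Set Filter

namespace Robust

universe u

variable {Ω : Type*} [MeasurableSpace Ω]

open scoped ENNReal Topology

theorem exists_monotone_seq_ge {ι : Type*} [Preorder ι] [IsDirected ι (· ≤ ·)] (a : ℕ → ι) :
    ∃ β : ℕ → ι, Monotone β ∧ ∀ n, a n ≤ β n := by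
  choose ub hub_left hub_right using fun p q : ι => exists_ge_ge p q
  refine ⟨fun n => Nat.rec (a 0) (fun n b => ub b (a (n + 1))) n,
    monotone_nat_of_le_succ fun n => hub_left _ _, fun n => ?_⟩
  cases n
  exacts [le_rfl, hub_right _ _]

theorem exists_monotone_seq_tendsto_iInf {α ι : Type*} [ConditionallyCompleteLinearOrder α]
    [TopologicalSpace α] [OrderTopology α] [FirstCountableTopology α] [Preorder ι]
    [IsDirected ι (· ≤ ·)] [Nonempty ι] {f : ι → α} (hf : Antitone f)
    (hbdd : BddBelow (range f)) :
    ∃ β : ℕ → ι, Monotone β ∧ Tendsto (f ∘ β) atTop (𝓝 (⨅ i, f i)) := by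
  obtain ⟨u, -, hu, hu_mem⟩ := exists_seq_tendsto_sInf (range_nonempty f) hbdd
  choose a ha using hu_mem
  obtain ⟨β, hβ, haβ⟩ := exists_monotone_seq_ge a
  refine ⟨β, hβ, tendsto_of_tendsto_of_tendsto_of_le_of_le tendsto_const_nhds hu
    (fun n => ciInf_le hbdd _) fun n => ?_⟩
  rw [← ha n]
  exact hf (haβ n)

section Measure

variable {μ : Measure Ω}

theorem qsLe_singleton_iff {f g : Ω → ℝ} : QSLe {μ} f g ↔ f ≤ᵐ[μ] g := by
  refine ⟨fun h => ae_iff.2 (h μ rfl), ?_⟩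
  rintro h _ rfl
  exact ae_iff.1 h

theorem exists_monotone_seq_iInf_ae_le {ι : Type*} [Preorder ι] [IsDirected ι (· ≤ ·)]
    [Nonempty ι] {F : ι → Ω → ℝ≥0∞} (hF : ∀ α, Measurable (F α))
    (hF_anti : ∀ α β, α ≤ β → F β ≤ᵐ[μ] F α) (hF_fin : ∀ α, ∫⁻ ω, F α ω ∂μ ≠ ∞) :
    ∃ β : ℕ → ι, Monotone β ∧ ∀ α, (fun ω => ⨅ n, F (β n) ω) ≤ᵐ[μ] F α := by
  set I : ι → ℝ≥0∞ := fun α => ∫⁻ ω, F α ω ∂μ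
  have hI_anti : Antitone I := fun α β h => lintegral_mono_ae (hF_anti α β h)
  have hI_inf_ne_top : ⨅ α, I α ≠ ∞ :=
    ne_top_of_le_ne_top (hF_fin (Classical.arbitrary ι)) (iInf_le _ _)
  obtain ⟨β, hβ, hβ_lim⟩ := exists_monotone_seq_tendsto_iInf hI_anti (OrderBot.bddBelow _)
  refine ⟨β, hβ, fun α => ?_⟩
  set W : Ω → ℝ≥0∞ := fun ω => ⨅ n, F (β n) ω
  choose γ hβγ hαγ using fun n => exists_ge_ge (β n) α
  have hgap : ∀ n, ∫⁻ ω, (W ω - F α ω) ∂μ ≤ I (β n) - ⨅ α, I α := fun n =>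
    calc ∫⁻ ω, (W ω - F α ω) ∂μ ≤ ∫⁻ ω, (F (β n) ω - F (γ n) ω) ∂μ := by
          refine lintegral_mono_ae ?_
          filter_upwards [hF_anti _ _ (hαγ n)] with ω hω
          exact tsub_le_tsub (iInf_le _ n) hω
      _ = I (β n) - I (γ n) := lintegral_sub (hF _) (hF_fin _) (hF_anti _ _ (hβγ n))
      _ ≤ I (β n) - ⨅ α, I α := tsub_le_tsub_left (iInf_le _ _) _
  have hgap_lim : Tendsto (fun n => I (β n) - ⨅ α, I α) atTop (𝓝 0) := by
    simpa using ENNReal.Tendsto.sub hβ_lim tendsto_const_nhds (Or.inr hI_inf_ne_top)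
  have hzero : ∫⁻ ω, (W ω - F α ω) ∂μ = 0 :=
    le_antisymm (ge_of_tendsto' hgap_lim hgap) bot_le
  have hW_meas : Measurable W := Measurable.iInf fun n => hF _
  filter_upwards [(lintegral_eq_zero_iff (hW_meas.sub (hF α))).1 hzero] with ω hω
  exact tsub_eq_zero_iff_le.1 hω

theorem tendsto_zero_of_tendsto_min_one {ι : Type*} {l : Filter ι} {y : ι → ℝ}
    (h : Tendsto (fun i => min (y i) 1) l (𝓝 0)) : Tendsto y l (𝓝 0) :=
  h.congr' <| (h.eventually (gt_mem_nhds one_pos)).mono fun _ hi =>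
    min_eq_left (min_lt_iff.1 hi |>.resolve_right (lt_irrefl 1)).le

theorem exists_seq_ae_tendsto_zero_of_isQSInf [IsFiniteMeasure μ] {ι : Type*} [Preorder ι]
    [IsDirected ι (· ≤ ·)] [Nonempty ι] {Y : ι → Ω → ℝ} (hY : ∀ α, Measurable (Y α))
    (hY_anti : ∀ α β, α ≤ β → Y β ≤ᵐ[μ] Y α) (hY_inf : IsQSInf {μ} (range Y) fun _ => 0) :
    ∃ β : ℕ → ι, ∀ᵐ ω ∂μ, Tendsto (fun n => Y (β n) ω) atTop (𝓝 0) := by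
  have hY_nonneg : ∀ α, 0 ≤ᵐ[μ] Y α := fun α => qsLe_singleton_iff.1 (hY_inf.1 _ ⟨α, rfl⟩)
  set F : ι → Ω → ℝ≥0∞ := fun α ω => ENNReal.ofReal (min (Y α ω) 1)
  have hF_anti : ∀ α β, α ≤ β → F β ≤ᵐ[μ] F α := fun α β h =>
    (hY_anti α β h).mono fun ω hω => ENNReal.ofReal_le_ofReal (min_le_min_right 1 hω)
  have hF : ∀ α, Measurable (F α) := fun α => ((hY α).min measurable_const).ennreal_ofReal
  have hF_fin : ∀ α, ∫⁻ ω, F α ω ∂μ ≠ ∞ := fun α =>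
    ne_top_of_le_ne_top (by simp)
      (lintegral_mono fun ω => ENNReal.ofReal_le_one.2 (min_le_right (Y α ω) 1))
  obtain ⟨β, hβ, hW_le⟩ := exists_monotone_seq_iInf_ae_le hF hF_anti hF_fin
  set W : Ω → ℝ≥0∞ := fun ω => ⨅ n, F (β n) ω
  have hW_lb : IsQSLB {μ} (range Y) fun ω => (W ω).toReal := by
    rintro _ ⟨α, rfl⟩
    refine qsLe_singleton_iff.2 ?_
    filter_upwards [hW_le α, hY_nonneg α] with ω hW hY0
    exact (ENNReal.toReal_le_of_le_ofReal (le_min hY0 zero_le_one) hW).trans (min_le_left _ _)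
  have hW_nonpos := qsLe_singleton_iff.1 <|
    hY_inf.2 _ (Measurable.iInf fun n => hF (β n)).ennreal_toReal hW_lb
  have hF_lim : ∀ᵐ ω ∂μ, Tendsto (fun n => F (β n) ω) atTop (𝓝 (W ω)) := by
    have hF_seq_anti : ∀ᵐ ω ∂μ, Antitone fun n => F (β n) ω := by
      simp only [Antitone, ae_all_iff]
      exact fun m n hmn => hF_anti _ _ (hβ hmn)
    filter_upwards [hF_seq_anti] with ω hω
    exact tendsto_atTop_iInf hω
  refine ⟨β, ?_⟩
  filter_upwards [hF_lim, hW_nonpos, ae_all_iff.2 fun n => hY_nonneg (β n)] with ω hlim hW0 hY0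
  have hW_ne_top : W ω ≠ ∞ := ne_top_of_le_ne_top ENNReal.ofReal_ne_top (iInf_le _ 0)
  have hW_zero : W ω = 0 :=
    ((ENNReal.toReal_eq_zero_iff _).1 (le_antisymm hW0 ENNReal.toReal_nonneg)).resolve_right
      hW_ne_top
  refine tendsto_zero_of_tendsto_min_one ?_
  have hmin_lim := (ENNReal.tendsto_toReal ENNReal.zero_ne_top).comp (hW_zero ▸ hlim)
  rw [ENNReal.toReal_zero] at hmin_lim
  exact hmin_lim.congr fun n => ENNReal.toReal_ofReal (le_min (hY0 n) zero_le_one)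

theorem OrderConvTo.exists_seq_ae_tendsto [IsFiniteMeasure μ] {ι : Type u} [Preorder ι]
    [IsDirected ι (· ≤ ·)] [Nonempty ι] {X : ι → Ω → ℝ} {x : Ω → ℝ}
    (h : OrderConvTo {μ} X x) :
    ∃ β : ℕ → ι, ∀ᵐ ω ∂μ, Tendsto (fun n => X (β n) ω) atTop (𝓝 (x ω)) := by
  obtain ⟨Y, hY, hY_anti, hY_inf, hXY⟩ := h
  obtain ⟨β, hβ⟩ := exists_seq_ae_tendsto_zero_of_isQSInf hY
    (fun α β h => qsLe_singleton_iff.1 (hY_anti α β h)) hY_inf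
  refine ⟨β, ?_⟩
  have hXY_ae : ∀ᵐ ω ∂μ, ∀ n, |X (β n) ω - x ω| ≤ Y (β n) ω :=
    ae_all_iff.2 fun n => qsLe_singleton_iff.1 (hXY (β n))
  filter_upwards [hβ, hXY_ae] with ω hω hXYω
  exact tendsto_iff_norm_sub_tendsto_zero.2 (squeeze_zero (fun _ => norm_nonneg _) hXYω hω)

end Measure

section TailSup

variable {α : Type*} [ConditionallyCompleteLinearOrder α] {d : ℕ → α}

theorem bddAbove_range_comp_add (hd : BddAbove (range d)) (k : ℕ) :
    BddAbove (range fun j => d (k + j)) :=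
  hd.mono (range_subset_iff.2 fun _ => mem_range_self _)

theorem le_ciSup_add (hd : BddAbove (range d)) (k : ℕ) : d k ≤ ⨆ j, d (k + j) :=
  le_ciSup (bddAbove_range_comp_add hd k) 0

theorem antitone_ciSup_add (hd : BddAbove (range d)) : Antitone fun k => ⨆ j, d (k + j) := by
  intro k l hkl
  refine ciSup_le fun j => ?_
  rw [show l + j = k + (l - k + j) by omega]
  exact le_ciSup (bddAbove_range_comp_add hd k) _

theorem tendsto_ciSup_add [TopologicalSpace α] [OrderTopology α] [DenselyOrdered α] {c : α}
    (hd : Tendsto d atTop (𝓝 c)) : Tendsto (fun k => ⨆ j, d (k + j)) atTop (𝓝 c) := by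
  refine tendsto_order.2 ⟨fun a ha => (hd.eventually (lt_mem_nhds ha)).mono fun k hk =>
    hk.trans_le (le_ciSup_add hd.bddAbove_range k), fun a ha => ?_⟩
  obtain ⟨b, hcb, hba⟩ := exists_between ha
  obtain ⟨N, hN⟩ := eventually_atTop.1 (hd.eventually (gt_mem_nhds hcb))
  filter_upwards [eventually_ge_atTop N] with k hk
  exact (ciSup_le fun j => (hN _ (by omega)).le).trans_lt hba

end TailSup

theorem orderConvTo_of_ae_tendsto {μ : Measure Ω} {f : ℕ → Ω → ℝ} {g : Ω → ℝ}
    (hf : ∀ n, Measurable (f n)) (hg : Measurable g)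
    (hfg : ∀ᵐ ω ∂μ, Tendsto (fun n => f n ω) atTop (𝓝 (g ω))) :
    OrderConvTo.{u} {μ} (fun n : ULift ℕ => f n.down) g := by
  have hdist : ∀ᵐ ω ∂μ, Tendsto (fun n => |f n ω - g ω|) atTop (𝓝 0) :=
    hfg.mono fun ω hω => by simpa using (hω.sub_const (g ω)).abs
  set Y : ℕ → Ω → ℝ := fun k ω => ⨆ j, |f (k + j) ω - g ω|
  refine ⟨fun k => Y k.down, fun k => Measurable.iSup fun j => ((hf _).sub hg).abs,
    fun k l hkl => ?_, ⟨?_, fun w _ hw => ?_⟩, fun k => ?_⟩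
  · refine qsLe_singleton_iff.2 (hdist.mono fun ω hω => ?_)
    exact antitone_ciSup_add hω.bddAbove_range hkl
  · rintro _ ⟨k, rfl⟩
    exact qsLe_singleton_iff.2 (ae_of_all _ fun ω => Real.iSup_nonneg fun j => abs_nonneg _)
  · have hw_le : ∀ᵐ ω ∂μ, ∀ k, w ω ≤ Y k ω :=
      ae_all_iff.2 fun k => qsLe_singleton_iff.1 (hw _ ⟨⟨k⟩, rfl⟩)
    refine qsLe_singleton_iff.2 ?_
    filter_upwards [hw_le, hdist] with ω hwω hω
    exact ge_of_tendsto' (tendsto_ciSup_add hω) hwω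
  · refine qsLe_singleton_iff.2 (hdist.mono fun ω hω => ?_)
    exact le_ciSup_add hω.bddAbove_range k.down

theorem closedInProbability_iff_orderClosed_general
    {Ω : Type*} [MeasurableSpace Ω] (P : Measure Ω) (hP : IsProbabilityMeasure P)
    (𝒞 : Set (Ω → ℝ))
    (hmem : ∀ f ∈ 𝒞, Measurable f ∧ QSLe {P} 0 f) :
    (∀ (f : ℕ → Ω → ℝ) (g : Ω → ℝ), (∀ n, f n ∈ 𝒞) → Measurable g →
        MeasureTheory.TendstoInMeasure P f Filter.atTop g → ∃ g' ∈ 𝒞, QSEq {P} g g') ↔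
      OrderClosedL0.{u} {P} 𝒞 := by
  constructor
  · intro hclosed ι _ _ _ X x hX hx hXx
    obtain ⟨β, hβ⟩ := hXx.exists_seq_ae_tendsto
    exact hclosed _ x (fun n => hX _) hx <|
      tendstoInMeasure_of_tendsto_ae (fun n => (hmem _ (hX _)).1.aestronglyMeasurable) hβ
  · intro hclosed f g hf hg hfg
    obtain ⟨ns, -, hns⟩ := hfg.exists_seq_tendsto_ae
    exact hclosed (ULift ℕ) _ g (fun n => hf _) hg <|
      orderConvTo_of_ae_tendsto (f := fun k => f (ns k)) (fun n => (hmem _ (hf _)).1) hg hns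

/-- A solid subset of the positive cone of `L⁰_{P*}` is closed with respect to convergence
in probability under `P*` iff it is order closed. -/
theorem closedInProbability_iff_orderClosed
    {Ω : Type*} [MeasurableSpace Ω] (P : Measure Ω) (hP : IsProbabilityMeasure P)
    (𝒞 : Set (Ω → ℝ)) (hne : 𝒞.Nonempty)
    (hmem : ∀ f ∈ 𝒞, Measurable f ∧ QSLe {P} 0 f)
    (hsolid : ∀ f ∈ 𝒞, ∀ g : Ω → ℝ, Measurable g → QSLe {P} 0 g → QSLe {P} g f → g ∈ 𝒞) :
    (∀ (f : ℕ → Ω → ℝ) (g : Ω → ℝ), (∀ n, f n ∈ 𝒞) → Measurable g →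
        MeasureTheory.TendstoInMeasure P f Filter.atTop g → ∃ g' ∈ 𝒞, QSEq {P} g g') ↔
      OrderClosedL0.{u} {P} 𝒞 :=
  closedInProbability_iff_orderClosed_general P hP 𝒞 hmem

end Robust
end

section
/- Let (𝒴,‖·‖_𝒴) be a normed real vector space whose norm dual space is (isometrically, as ordered spaces) an Archimedean Banach lattice (𝒳,⪯,‖·‖_𝒳). If the positive cone 𝒳₊ is weak*-closed (i.e. σ(𝒳,𝒴)-closed), then 𝒳 is Dedekind complete. -/
open Filter Set

/-!
Let `s₀ ∈ S` and `b` an upper bound of `S`. The finite suprema `p ⊔ s₀`, `p` in the sup-closure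
of `S`, form an increasing net in the order interval `[s₀, b]`, which is norm bounded and hence,
by Banach–Alaoglu, lies in a weak*-compact set. Since the cone is weak*-closed, so are the sets
`{x | c ≤ x}` and `{x | x ≤ c}`; a weak*-cluster point of the net is therefore above every
term of the net and below every upper bound of `S`, i.e. it is the supremum of `S`.
-/

section ClosedCone

variable {G X : Type*} [AddGroup G] [TopologicalSpace G] [ContinuousSub G]
  [AddGroup X] [LE X] [AddRightMono X] {Φ : G →+ X}

theorem isClosed_setOf_le_apply_of_isClosed_nonneg (hΦ : Function.Surjective Φ)
    (hcone : IsClosed {g | 0 ≤ Φ g}) (c : X) : IsClosed {g | c ≤ Φ g} := by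
  obtain ⟨g₀, rfl⟩ := hΦ c
  have : {g | Φ g₀ ≤ Φ g} = (· - g₀) ⁻¹' {g | 0 ≤ Φ g} := by
    ext g; simp [sub_nonneg]
  exact this ▸ hcone.preimage (continuous_id.sub continuous_const)

theorem isClosed_setOf_apply_le_of_isClosed_nonneg (hΦ : Function.Surjective Φ)
    (hcone : IsClosed {g | 0 ≤ Φ g}) (c : X) : IsClosed {g | Φ g ≤ c} := by
  obtain ⟨g₀, rfl⟩ := hΦ c
  have : {g | Φ g ≤ Φ g₀} = (g₀ - ·) ⁻¹' {g | 0 ≤ Φ g} := by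
    ext g; simp [sub_nonneg]
  exact this ▸ hcone.preimage (continuous_const.sub continuous_id)

end ClosedCone

theorem isLUB_range_of_mapClusterPt {α β ι : Type*} [TopologicalSpace α] [Preorder β]
    [Preorder ι] {g : α → β} (hge : ∀ c, IsClosed {a | c ≤ g a})
    (hle : ∀ c, IsClosed {a | g a ≤ c}) {f : ι → α} (hf : Monotone (g ∘ f)) {a : α}
    (ha : MapClusterPt a atTop f) : IsLUB (range (g ∘ f)) (g a) := by
  refine ⟨?_, fun u hu => ?_⟩
  · rintro _ ⟨i, rfl⟩
    exact (hge _).mem_of_mapClusterPt ha (eventually_ge_atTop i |>.mono fun _ hj => hf hj)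
  · exact (hle u).mem_of_mapClusterPt ha (Eventually.of_forall fun j => hu ⟨j, rfl⟩)

theorem norm_le_of_mem_Icc {X : Type*} [NormedAddCommGroup X] [Lattice X] [IsOrderedAddMonoid X]
    [HasSolidNorm X] {a b x : X} (hx : x ∈ Icc a b) : ‖x‖ ≤ ‖a‖ + ‖b - a‖ := by
  have hsolid : ‖x - a‖ ≤ ‖b - a‖ := by
    refine HasSolidNorm.solid ?_
    rw [abs_of_nonneg (sub_nonneg.2 hx.1), abs_of_nonneg (sub_nonneg.2 (hx.1.trans hx.2))]
    exact sub_le_sub_right hx.2 a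
  calc ‖x‖ = ‖a + (x - a)‖ := by rw [add_sub_cancel]
    _ ≤ ‖a‖ + ‖x - a‖ := norm_add_le _ _
    _ ≤ ‖a‖ + ‖b - a‖ := by gcongr

theorem upperBounds_range_sup_supClosure {X : Type*} [SemilatticeSup X] {S : Set X} {s₀ : X}
    (hs₀ : s₀ ∈ S) :
    upperBounds (range fun p : supClosure S => (p : X) ⊔ s₀) = upperBounds S := by
  ext u
  refine ⟨fun hu s hs => le_sup_left.trans (hu ⟨⟨s, subset_supClosure hs⟩, rfl⟩), ?_⟩
  rintro hu _ ⟨p, rfl⟩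
  exact sup_le ((upperBounds_supClosure S ▸ hu) p.2) (hu hs₀)

theorem dedekindComplete_of_weakStarClosed_cone_general
    {Y : Type*} [NormedAddCommGroup Y] [NormedSpace ℝ Y]
    {X : Type*} [NormedAddCommGroup X] [Lattice X] [IsOrderedAddMonoid X] [HasSolidNorm X]
    [NormedSpace ℝ X]
    (e : X ≃ₗᵢ[ℝ] StrongDual ℝ Y)
    (hcone : IsClosed {φ : WeakDual ℝ Y | 0 ≤ e.symm (WeakDual.toStrongDual φ)}) :
    ∀ S : Set X, S.Nonempty → BddAbove S → ∃ a : X, IsLUB S a := by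
  rintro S ⟨s₀, hs₀⟩ ⟨b, hb⟩
  let Ψ : WeakDual ℝ Y ≃ₗ[ℝ] X := WeakDual.toStrongDual.trans e.symm.toLinearEquiv
  let Φ : WeakDual ℝ Y →+ X := Ψ.toAddMonoidHom
  have hΦ : Function.Surjective Φ := Ψ.surjective
  let : SemilatticeSup (supClosure S) :=
    Subtype.semilatticeSup fun _ _ hx hy => supClosed_supClosure hx hy
  have : Nonempty (supClosure S) := ⟨⟨s₀, subset_supClosure hs₀⟩⟩
  let f : supClosure S → WeakDual ℝ Y := fun p => StrongDual.toWeakDual (e ((p : X) ⊔ s₀))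
  have hΦf : ∀ p, Φ (f p) = (p : X) ⊔ s₀ := fun p => e.symm_apply_apply _
  have hf_mem : ∀ p, f p ∈ WeakDual.toStrongDual ⁻¹' Metric.closedBall 0 (‖s₀‖ + ‖b ⊔ s₀ - s₀‖) :=
    fun p => by
      rw [mem_preimage, mem_closedBall_zero_iff]
      exact (e.norm_map _).trans_le <| norm_le_of_mem_Icc
        ⟨le_sup_right, sup_le_sup_right ((upperBounds_supClosure S ▸ hb) p.2) s₀⟩
  obtain ⟨φ, -, hφ⟩ := (WeakDual.isCompact_closedBall 0 _).exists_mapClusterPt (f := atTop)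
    (tendsto_principal.2 (Eventually.of_forall hf_mem))
  have hmono : Monotone (Φ ∘ f) := fun p q hpq => by
    simpa only [Function.comp, hΦf] using sup_le_sup_right (α := X) hpq s₀
  have hlub := isLUB_range_of_mapClusterPt
    (isClosed_setOf_le_apply_of_isClosed_nonneg hΦ hcone)
    (isClosed_setOf_apply_le_of_isClosed_nonneg hΦ hcone) hmono hφ
  refine ⟨Φ φ, (isLUB_congr ?_).1 hlub⟩
  simp only [Function.comp_def, hΦf]
  exact upperBounds_range_sup_supClosure hs₀

/-- Proposition (prop:onlyDC): if a normed space `𝒴` has an Archimedean Banach lattice `𝒳`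
as its dual space and the positive cone of `𝒳` is weak*-closed, then `𝒳` is Dedekind
complete. -/
theorem dedekindComplete_of_weakStarClosed_cone
    {Y : Type*} [NormedAddCommGroup Y] [NormedSpace ℝ Y]
    {X : Type*} [NormedAddCommGroup X] [Lattice X] [IsOrderedAddMonoid X] [HasSolidNorm X]
    [NormedSpace ℝ X] [PosSMulStrictMono ℝ X] [PosSMulReflectLT ℝ X]
    [CompleteSpace X]
    (harch : ∀ x y : X, 0 ≤ x → 0 ≤ y → (∀ n : ℕ, n • y ≤ x) → y = 0)
    (e : X ≃ₗᵢ[ℝ] StrongDual ℝ Y)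
    (hcone : IsClosed {φ : WeakDual ℝ Y | 0 ≤ e.symm (WeakDual.toStrongDual φ)}) :
    ∀ S : Set X, S.Nonempty → BddAbove S → ∃ a : X, IsLUB S a :=
  dedekindComplete_of_weakStarClosed_cone_general e hcone
end

section
/- Let 𝒳 be an ideal of L⁰_𝐜 with L^∞_𝐜 ⊂ 𝒳 ⊂ L⁰_𝐜, and let τ be a locally convex-solid Hausdorff topology on 𝒳. If (𝒳,τ) has the Kreps-Yan property, then 𝔓 is dominated, i.e. there is a probability measure P on (Ω,𝓕) such that every P-null event is 𝔓-polar. -/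
open MeasureTheory Set Filter

namespace Robust

universe u

variable {Ω : Type*} [MeasurableSpace Ω]

/-- `𝔓` is dominated by a single probability measure. -/
def Dominated (𝔓 : Set (Measure Ω)) : Prop :=
  ∃ P : Measure Ω, IsProbabilityMeasure P ∧
    ∀ N : Set Ω, MeasurableSet N → P N = 0 → Polar 𝔓 N

/-- `M` represents an ideal `𝒳` of `L⁰_𝐜` with `L^∞_𝐜 ⊆ 𝒳`. -/
def IsIdealSpace (𝔓 : Set (Measure Ω)) (M : Set (Ω → ℝ)) : Prop :=
  (∀ f ∈ M, Measurable f) ∧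
  (∀ f : Ω → ℝ, MemLinf 𝔓 f → f ∈ M) ∧
  (∀ f ∈ M, ∀ g ∈ M, f + g ∈ M) ∧
  (∀ (c : ℝ), ∀ f ∈ M, c • f ∈ M) ∧
  (∀ g ∈ M, ∀ f : Ω → ℝ, Measurable f →
    QSLe 𝔓 (fun ω => |f ω|) (fun ω => |g ω|) → f ∈ M)

/-- `pfam` is a family of lattice seminorms on `M`, generating a locally convex-solid
topology. -/
def IsLatticeSeminormFamily (𝔓 : Set (Measure Ω)) (M : Set (Ω → ℝ))
    (pfam : Set ((Ω → ℝ) → ℝ)) : Prop :=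
  pfam.Nonempty ∧ ∀ p ∈ pfam,
    (∀ f ∈ M, ∀ g ∈ M, QSEq 𝔓 f g → p f = p g) ∧
    (∀ f ∈ M, 0 ≤ p f) ∧
    (∀ f ∈ M, ∀ g ∈ M, p (f + g) ≤ p f + p g) ∧
    (∀ (c : ℝ), ∀ f ∈ M, p (c • f) = |c| * p f) ∧
    (∀ f ∈ M, ∀ g ∈ M, QSLe 𝔓 (fun ω => |f ω|) (fun ω => |g ω|) → p f ≤ p g)

/-- The topology generated by `pfam` is Hausdorff on (the classes of) `M`. -/
def HausdorffFamily (𝔓 : Set (Measure Ω)) (M : Set (Ω → ℝ))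
    (pfam : Set ((Ω → ℝ) → ℝ)) : Prop :=
  ∀ f ∈ M, (∀ p ∈ pfam, p f = 0) → QSEq 𝔓 f 0

/-- `x` lies in the `τ`-closure of `𝒞`, where `τ` is the topology generated by the
seminorm family `pfam`. -/
def TauClosurePoint (pfam : Set ((Ω → ℝ) → ℝ)) (𝒞 : Set (Ω → ℝ)) (x : Ω → ℝ) : Prop :=
  ∀ F : Finset ((Ω → ℝ) → ℝ), ↑F ⊆ pfam → ∀ ε : ℝ, 0 < ε →
    ∃ y ∈ 𝒞, ∀ p ∈ F, p (x - y) < ε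

/-- `ξ` is a `τ`-continuous linear functional on `M`, where `τ` is generated by `pfam`. -/
def TauContinuousLinear (M : Set (Ω → ℝ)) (pfam : Set ((Ω → ℝ) → ℝ))
    (ξ : (Ω → ℝ) → ℝ) : Prop :=
  (∀ f ∈ M, ∀ g ∈ M, ξ (f + g) = ξ f + ξ g) ∧
  (∀ (c : ℝ), ∀ f ∈ M, ξ (c • f) = c * ξ f) ∧
  ∃ (F : Finset ((Ω → ℝ) → ℝ)) (C : ℝ), ↑F ⊆ pfam ∧ F.Nonempty ∧ 0 ≤ C ∧
    ∀ f ∈ M, ∃ p ∈ F, |ξ f| ≤ C * p f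

/-- The Kreps-Yan property of `(𝒳,τ)`. -/
def KrepsYan (𝔓 : Set (Measure Ω)) (M : Set (Ω → ℝ)) (pfam : Set ((Ω → ℝ) → ℝ)) : Prop :=
  ∀ 𝒞 : Set (Ω → ℝ), 𝒞 ⊆ M →
    (∀ f ∈ 𝒞, ∀ g ∈ 𝒞, f + g ∈ 𝒞) →
    (∀ (c : ℝ), 0 ≤ c → ∀ f ∈ 𝒞, c • f ∈ 𝒞) →
    (∀ f ∈ M, QSLe 𝔓 0 f → -f ∈ 𝒞) →
    (∀ x ∈ M, TauClosurePoint pfam 𝒞 x → QSLe 𝔓 0 x → QSEq 𝔓 x 0) →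
    ∃ ξ : (Ω → ℝ) → ℝ, TauContinuousLinear M pfam ξ ∧
      (∀ f ∈ M, QSLe 𝔓 0 f → 0 ≤ ξ f) ∧
      (∀ f ∈ M, QSLe 𝔓 0 f → ¬ QSEq 𝔓 f 0 → 0 < ξ f) ∧
      (∀ f ∈ 𝒞, ξ f ≤ 0)

section Aux

variable {𝔓 : Set (Measure Ω)}

lemma polar_mono' {A B : Set Ω} (h : A ⊆ B) (hB : Polar 𝔓 B) : Polar 𝔓 A :=
  fun P hP => measure_mono_null h (hB P hP)

lemma polar_empty' : Polar 𝔓 (∅ : Set Ω) := fun _ _ => measure_empty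

lemma polar_union' {A B : Set Ω} (hA : Polar 𝔓 A) (hB : Polar 𝔓 B) :
    Polar 𝔓 (A ∪ B) := fun P hP => measure_union_null (hA P hP) (hB P hP)

lemma qsle_of_forall {f g : Ω → ℝ} (h : ∀ ω, f ω ≤ g ω) : QSLe 𝔓 f g := by
  have : {ω | ¬ f ω ≤ g ω} = (∅ : Set Ω) := by
    ext ω; simp [h ω]
  unfold QSLe; rw [this]; exact polar_empty'

end Aux

/-- Corollary (cor:KrepsYan): if an ideal `L^∞_𝐜 ⊆ 𝒳 ⊆ L⁰_𝐜` carries a locally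
convex-solid Hausdorff topology with the Kreps-Yan property, then `𝔓` is dominated. -/
theorem dominated_of_krepsYan
    {Ω : Type*} [MeasurableSpace Ω] (𝔓 : Set (Measure Ω)) (h𝔓 : 𝔓.Nonempty)
    (hprob : ∀ P ∈ 𝔓, IsProbabilityMeasure P)
    (M : Set (Ω → ℝ)) (hM : IsIdealSpace 𝔓 M)
    (pfam : Set ((Ω → ℝ) → ℝ)) (hpfam : IsLatticeSeminormFamily 𝔓 M pfam)
    (hHaus : HausdorffFamily 𝔓 M pfam)
    (hKY : KrepsYan 𝔓 M pfam) :
    Dominated 𝔓 := by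
  obtain ⟨hMmeas, hMlinf, hMadd, hMsmul, hMideal⟩ := hM
  -- indicators of measurable sets belong to `M`
  have hind_nonneg : ∀ (A : Set Ω) (ω : Ω), 0 ≤ indC A ω := by
    intro A ω; by_cases h : ω ∈ A <;> simp [indC, h]
  have hindM : ∀ A : Set Ω, MeasurableSet A → (indC A : Ω → ℝ) ∈ M := by
    intro A hA
    refine hMlinf _ ⟨measurable_one.indicator hA, 1, qsle_of_forall ?_⟩
    intro ω
    by_cases h : ω ∈ A <;> simp [indC, h]
  -- the cone of q.s. nonpositive elements of `M`
  set 𝒞 : Set (Ω → ℝ) := {f | f ∈ M ∧ QSLe 𝔓 f 0} with h𝒞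
  have hc1 : 𝒞 ⊆ M := fun f hf => hf.1
  have hc2 : ∀ f ∈ 𝒞, ∀ g ∈ 𝒞, f + g ∈ 𝒞 := by
    rintro f ⟨hfM, hf⟩ g ⟨hgM, hg⟩
    refine ⟨hMadd f hfM g hgM, polar_mono' ?_ (polar_union' hf hg)⟩
    intro ω hω
    simp only [Set.mem_setOf_eq, Pi.add_apply, Pi.zero_apply, Set.mem_union] at hω ⊢
    by_contra hcon
    push_neg at hcon
    exact hω (by linarith [hcon.1, hcon.2])
  have hc3 : ∀ (c : ℝ), 0 ≤ c → ∀ f ∈ 𝒞, c • f ∈ 𝒞 := by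
    rintro c hc f ⟨hfM, hf⟩
    refine ⟨hMsmul c f hfM, polar_mono' ?_ hf⟩
    intro ω hω
    simp only [Set.mem_setOf_eq, Pi.smul_apply, smul_eq_mul, Pi.zero_apply] at hω ⊢
    intro h
    exact hω (mul_nonpos_iff.mpr (Or.inl ⟨hc, h⟩))
  have hc4 : ∀ f ∈ M, QSLe 𝔓 0 f → -f ∈ 𝒞 := by
    intro f hfM hf
    have hneg : -f = (-1 : ℝ) • f := by funext ω; simp
    refine ⟨by rw [hneg]; exact hMsmul (-1) f hfM, polar_mono' ?_ hf⟩
    intro ω hω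
    simp only [Set.mem_setOf_eq, Pi.neg_apply, Pi.zero_apply] at hω ⊢
    intro h
    exact hω (by linarith)
  have hc5 : ∀ x ∈ M, TauClosurePoint pfam 𝒞 x → QSLe 𝔓 0 x → QSEq 𝔓 x 0 := by
    intro x hxM hcl hx0
    apply hHaus x hxM
    intro p hp
    obtain ⟨hcong, hnn, hsubadd, hhom, hmono⟩ := hpfam.2 p hp
    have hxnn := hnn x hxM
    have key : ∀ ε : ℝ, 0 < ε → p x < ε := by
      intro ε hε
      obtain ⟨y, ⟨hyM, hy0⟩, hyε⟩ := hcl {p} (by simp [hp]) ε hε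
      have hxyM : x - y ∈ M := by
        have h' : x - y = x + (-1 : ℝ) • y := by funext ω; simp [sub_eq_add_neg]
        rw [h']; exact hMadd x hxM _ (hMsmul (-1) y hyM)
      have hle : p x ≤ p (x - y) := by
        apply hmono x hxM (x - y) hxyM
        apply polar_mono' ?_ (polar_union' hx0 hy0)
        intro ω hω
        simp only [Set.mem_setOf_eq, Pi.sub_apply, Pi.zero_apply, Set.mem_union] at hω ⊢
        by_contra hcon
        push_neg at hcon
        obtain ⟨h1, h2⟩ := hcon
        apply hω
        rw [abs_of_nonneg h1]
        calc x ω ≤ x ω - y ω := by linarith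
          _ ≤ |x ω - y ω| := le_abs_self _
      exact lt_of_le_of_lt hle (hyε p (Finset.mem_singleton_self p))
    by_contra hne
    have hpos' : 0 < p x := lt_of_le_of_ne hxnn (Ne.symm hne)
    exact absurd (key (p x) hpos') (lt_irrefl _)
  obtain ⟨ξ, ⟨hadd, hsmul, -⟩, hpos, hstrict, -⟩ := hKY 𝒞 hc1 hc2 hc3 hc4 hc5
  -- the finitely additive strictly positive set function
  set ν : Set Ω → ℝ := fun A => ξ (indC A) with hν
  have hν_nonneg : ∀ A : Set Ω, MeasurableSet A → 0 ≤ ν A := by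
    intro A hA
    exact hpos _ (hindM A hA) (qsle_of_forall fun ω => by simpa using hind_nonneg A ω)
  have hν_add : ∀ A B : Set Ω, MeasurableSet A → MeasurableSet B → Disjoint A B →
      ν (A ∪ B) = ν A + ν B := by
    intro A B hA hB hAB
    have h1 : indC (A ∪ B) = indC A + indC B := by
      funext ω
      simp only [indC, Pi.add_apply]
      rw [Set.indicator_union_of_disjoint hAB]
    show ξ (indC (A ∪ B)) = ξ (indC A) + ξ (indC B)
    rw [h1]
    exact hadd _ (hindM A hA) _ (hindM B hB)
  have hν_mono : ∀ A B : Set Ω, MeasurableSet A → MeasurableSet B → A ⊆ B → ν A ≤ ν B := by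
    intro A B hA hB hAB
    have hd := hν_add A (B \ A) hA (hB.diff hA) Set.disjoint_sdiff_right
    rw [Set.union_diff_cancel hAB] at hd
    have h2 := hν_nonneg (B \ A) (hB.diff hA)
    linarith
  have hν_zero_iff : ∀ N : Set Ω, MeasurableSet N → (ν N = 0 ↔ Polar 𝔓 N) := by
    intro N hN
    constructor
    · intro h0
      by_contra hnp
      have hqs : QSLe 𝔓 0 (indC N) := qsle_of_forall fun ω => by simpa using hind_nonneg N ω
      have hneq : ¬ QSEq 𝔓 (indC N) 0 := by
        intro hq
        apply hnp
        apply polar_mono' ?_ hq.1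
        intro ω hω
        simp only [Set.mem_setOf_eq, Pi.zero_apply, indC, Set.indicator_of_mem hω, Pi.one_apply]
        norm_num
      have := hstrict _ (hindM N hN) hqs hneq
      rw [show ξ (indC N) = ν N from rfl, h0] at this
      exact lt_irrefl _ this
    · intro hpol
      have h1 := hν_nonneg N hN
      have hqs2 : QSLe 𝔓 0 ((-1 : ℝ) • indC N) := by
        apply polar_mono' ?_ hpol
        intro ω hω
        simp only [Set.mem_setOf_eq, Pi.smul_apply, smul_eq_mul, Pi.zero_apply] at hω
        by_contra hωN
        apply hω
        simp [indC, Set.indicator_of_notMem hωN]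
      have h2 := hpos _ (hMsmul (-1) _ (hindM N hN)) hqs2
      rw [hsmul (-1) _ (hindM N hN)] at h2
      have : ξ (indC N) ≤ 0 := by linarith
      exact le_antisymm this h1
  -- the exhaustion functional
  set S : Measure Ω → Set ℝ := fun μ => ν '' {N : Set Ω | MeasurableSet N ∧ μ N = 0} with hSdef
  set t : Measure Ω → ℝ := fun μ => sSup (S μ) with htdef
  have hSne : ∀ μ : Measure Ω, (S μ).Nonempty :=
    fun μ => ⟨ν ∅, ∅, ⟨MeasurableSet.empty, measure_empty⟩, rfl⟩
  have hSbdd : ∀ μ : Measure Ω, BddAbove (S μ) := by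
    intro μ
    refine ⟨ν Set.univ, ?_⟩
    rintro r ⟨N, ⟨hN, -⟩, rfl⟩
    exact hν_mono N Set.univ hN MeasurableSet.univ (Set.subset_univ N)
  have hνempty : ν ∅ = 0 := (hν_zero_iff ∅ MeasurableSet.empty).2 polar_empty'
  have ht_nonneg : ∀ μ : Measure Ω, 0 ≤ t μ := by
    intro μ
    calc (0 : ℝ) = ν ∅ := hνempty.symm
      _ ≤ t μ := le_csSup (hSbdd μ) ⟨∅, ⟨MeasurableSet.empty, measure_empty⟩, rfl⟩
  -- attainment of the supremum by a maximal null set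
  have attain : ∀ μ : Measure Ω, ∃ Nm : Set Ω, MeasurableSet Nm ∧ μ Nm = 0 ∧ ν Nm = t μ := by
    intro μ
    have hstep : ∀ k : ℕ, ∃ N : Set Ω,
        MeasurableSet N ∧ μ N = 0 ∧ t μ - 1 / ((k : ℝ) + 1) < ν N := by
      intro k
      have hpos1 : (0 : ℝ) < 1 / ((k : ℝ) + 1) := by positivity
      have h1 : t μ - 1 / ((k : ℝ) + 1) < t μ := by linarith
      obtain ⟨r, ⟨N, ⟨hN, hNμ⟩, rfl⟩, hr⟩ := exists_lt_of_lt_csSup (hSne μ) h1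
      exact ⟨N, hN, hNμ, hr⟩
    choose Ns hNs₁ hNs₂ hNs₃ using hstep
    refine ⟨⋃ k, Ns k, MeasurableSet.iUnion hNs₁, measure_iUnion_null hNs₂, ?_⟩
    have hub : ν (⋃ k, Ns k) ≤ t μ :=
      le_csSup (hSbdd μ) ⟨_, ⟨MeasurableSet.iUnion hNs₁, measure_iUnion_null hNs₂⟩, rfl⟩
    refine le_antisymm hub ?_
    by_contra h
    push_neg at h
    obtain ⟨k, hk⟩ := exists_nat_one_div_lt (show (0 : ℝ) < t μ - ν (⋃ k, Ns k) by linarith)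
    have hlb : t μ - 1 / ((k : ℝ) + 1) < ν (⋃ k, Ns k) :=
      lt_of_lt_of_le (hNs₃ k)
        (hν_mono _ _ (hNs₁ k) (MeasurableSet.iUnion hNs₁) (Set.subset_iUnion Ns k))
    linarith
  -- the infimum over probability measures
  set T : Set ℝ := {r | ∃ μ : Measure Ω, IsProbabilityMeasure μ ∧ t μ = r} with hTdef
  obtain ⟨P₀, hP₀⟩ := h𝔓
  have hTne : T.Nonempty := ⟨t P₀, P₀, hprob P₀ hP₀, rfl⟩
  have hTbdd : BddBelow T := ⟨0, by rintro r ⟨μ, -, rfl⟩; exact ht_nonneg μ⟩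
  set σ : ℝ := sInf T with hσdef
  have hσ0 : 0 ≤ σ := le_csInf hTne (by rintro r ⟨μ, -, rfl⟩; exact ht_nonneg μ)
  have hstepμ : ∀ k : ℕ, ∃ μ : Measure Ω,
      IsProbabilityMeasure μ ∧ t μ < σ + 1 / ((k : ℝ) + 1) := by
    intro k
    have hpos1 : (0 : ℝ) < 1 / ((k : ℝ) + 1) := by positivity
    have h1 : σ < σ + 1 / ((k : ℝ) + 1) := by linarith
    obtain ⟨r, ⟨μ, hμ, rfl⟩, hr⟩ := exists_lt_of_csInf_lt hTne h1
    exact ⟨μ, hμ, hr⟩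
  choose μs hμsP hμst using hstepμ
  set μI : Measure Ω := Measure.sum (fun k => ((2 : ENNReal)⁻¹) ^ (k + 1) • μs k) with hμIdef
  have hcoeff_ne : ∀ k : ℕ, ((2 : ENNReal)⁻¹) ^ (k + 1) ≠ 0 := by
    intro k
    apply pow_ne_zero
    simp
  have hgeo : (∑' k : ℕ, ((2 : ENNReal)⁻¹) ^ (k + 1)) = 1 := by
    have h1 : ∀ k : ℕ, ((2 : ENNReal)⁻¹) ^ (k + 1) = 2⁻¹ * 2⁻¹ ^ k := fun k => pow_succ' _ _
    rw [tsum_congr h1, ENNReal.tsum_mul_left, ENNReal.tsum_geometric,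
      ENNReal.one_sub_inv_two, inv_inv]
    exact ENNReal.inv_mul_cancel two_ne_zero ENNReal.ofNat_ne_top
  haveI hμIprob : IsProbabilityMeasure μI := by
    constructor
    rw [hμIdef, Measure.sum_apply _ MeasurableSet.univ]
    have h1 : ∀ k : ℕ, (((2 : ENNReal)⁻¹) ^ (k + 1) • μs k) Set.univ
        = ((2 : ENNReal)⁻¹) ^ (k + 1) := by
      intro k
      haveI := hμsP k
      simp [Measure.smul_apply]
    rw [tsum_congr h1, hgeo]
  have hnull : ∀ N : Set Ω, MeasurableSet N → μI N = 0 → ∀ k, μs k N = 0 := by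
    intro N hN h k
    rw [hμIdef, Measure.sum_apply _ hN] at h
    have h2 := (ENNReal.tsum_eq_zero.mp h) k
    simp only [Measure.smul_apply, smul_eq_mul] at h2
    rcases mul_eq_zero.mp h2 with h' | h'
    · exact absurd h' (hcoeff_ne k)
    · exact h'
  have htμI : t μI = σ := by
    refine le_antisymm ?_ (csInf_le hTbdd ⟨μI, hμIprob, rfl⟩)
    by_contra h
    push_neg at h
    obtain ⟨k, hk⟩ := exists_nat_one_div_lt (show (0 : ℝ) < t μI - σ by linarith)
    have hsub : S μI ⊆ S (μs k) := by
      rintro r ⟨N, ⟨hN, hNμ⟩, rfl⟩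
      exact ⟨N, ⟨hN, hnull N hN hNμ k⟩, rfl⟩
    have h3 : t μI ≤ t (μs k) := csSup_le_csSup (hSbdd (μs k)) (hSne μI) hsub
    have h4 := hμst k
    linarith
  -- the infimum is zero
  have hσ_zero : σ = 0 := by
    by_contra hne
    have hσpos : 0 < σ := lt_of_le_of_ne hσ0 (Ne.symm hne)
    obtain ⟨Nm, hNm, hNmμ, hNmν⟩ := attain μI
    have hNmpol : ¬ Polar 𝔓 Nm := by
      intro hp
      have h0 := (hν_zero_iff Nm hNm).2 hp
      rw [hNmν, htμI] at h0
      linarith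
    rw [Polar] at hNmpol
    push_neg at hNmpol
    obtain ⟨Pst, hPst𝔓, hPstNm⟩ := hNmpol
    haveI := hprob Pst hPst𝔓
    set μ' : Measure Ω := (2 : ENNReal)⁻¹ • μI + (2 : ENNReal)⁻¹ • Pst with hμ'def
    haveI hμ'prob : IsProbabilityMeasure μ' := by
      constructor
      simp [hμ'def, ENNReal.inv_two_add_inv_two]
    have hμ'null : ∀ N : Set Ω, μ' N = 0 → μI N = 0 ∧ Pst N = 0 := by
      intro N h
      rw [hμ'def] at h
      simp only [Measure.add_toOuterMeasure, Measure.coe_add, Pi.add_apply,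
        Measure.smul_apply, smul_eq_mul] at h
      obtain ⟨h1, h2⟩ := add_eq_zero.mp h
      constructor
      · rcases mul_eq_zero.mp h1 with h' | h'
        · exact absurd h' (by simp)
        · exact h'
      · rcases mul_eq_zero.mp h2 with h' | h'
        · exact absurd h' (by simp)
        · exact h'
    have htμ' : t μ' = σ := by
      refine le_antisymm ?_ (csInf_le hTbdd ⟨μ', hμ'prob, rfl⟩)
      rw [← htμI]
      refine csSup_le_csSup (hSbdd μI) (hSne μ') ?_
      rintro r ⟨N, ⟨hN, hNμ⟩, rfl⟩
      exact ⟨N, ⟨hN, (hμ'null N hNμ).1⟩, rfl⟩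
    obtain ⟨N', hN', hN'μ, hN'ν⟩ := attain μ'
    obtain ⟨hN'μI, hN'P⟩ := hμ'null N' hN'μ
    have hUν : ν (Nm ∪ N') ≤ σ := by
      rw [← htμI]
      exact le_csSup (hSbdd μI)
        ⟨Nm ∪ N', ⟨hNm.union hN', measure_union_null hNmμ hN'μI⟩, rfl⟩
    have hdecomp : N' ∪ (Nm \ N') = Nm ∪ N' := by
      rw [Set.union_diff_self, Set.union_comm]
    have hadd2 : ν (N' ∪ (Nm \ N')) = ν N' + ν (Nm \ N') :=
      hν_add N' (Nm \ N') hN' (hNm.diff hN') Set.disjoint_sdiff_right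
    have hν_diff0 : ν (Nm \ N') = 0 := by
      have h1 : ν N' + ν (Nm \ N') ≤ σ := by
        rw [← hadd2, hdecomp]; exact hUν
      have h2 := hν_nonneg (Nm \ N') (hNm.diff hN')
      rw [hN'ν, htμ'] at h1
      linarith
    have hpol_diff := (hν_zero_iff _ (hNm.diff hN')).1 hν_diff0
    have hPdiff : Pst (Nm \ N') = 0 := hpol_diff Pst hPst𝔓
    have hsubNm : Nm ⊆ N' ∪ (Nm \ N') := by
      intro ω hω
      by_cases h : ω ∈ N' <;> simp [h, hω]
    exact hPstNm (measure_mono_null hsubNm (measure_union_null hN'P hPdiff))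
  -- conclusion
  refine ⟨μI, hμIprob, ?_⟩
  intro N hN hNμ
  apply (hν_zero_iff N hN).1
  have h1 : ν N ≤ t μI := le_csSup (hSbdd μI) ⟨N, ⟨hN, hNμ⟩, rfl⟩
  rw [htμI, hσ_zero] at h1
  exact le_antisymm h1 (hν_nonneg N hN)

end Robust
end
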